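/- arXiv:1910.02651 — 4 statements merged into one kernel-verified Lean document; each statement's English description precedes it below -/
import Mathlib

section
/- Let p, q ∈ [1,∞], f ∈ L^p_loc(ℝ^d), x₀ ∈ ℝ^d, n ∈ ℕ. Suppose there exists a sequence of polynomials (P_j) of degree ≤ n and a sequence (ε_j) ∈ ℓ^q such that 2^{jd/p}σ_j‖f − P_j‖_{L^p(B(x₀,2^{−j}))} ≤ ε_j for all j, where σ is admissible with s̲(σ) > 0 and n = ⌊s̄(σ)⌋. Then (σ_j 2^{jd/p} sup_{|h|≤2^{−j}} ‖Δ_h^{n+1} f‖_{L^p(B_h(x₀,2^{−j}))})_j ∈ ℓ^q, where B_h(x₀,r) = {x : [x, x+(n+1)h] ⊂ B(x₀,r)}. -/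
open MeasureTheory Filter Metric Topology
open scoped ENNReal NNReal

/-- A sequence of positive reals is admissible if consecutive terms are comparable. -/
def Admissible (σ : ℕ → ℝ) : Prop :=
  (∀ j, 0 < σ j) ∧ ∃ C > (0:ℝ), ∀ j, C⁻¹ * σ j ≤ σ (j + 1) ∧ σ (j + 1) ≤ C * σ j

noncomputable def lowerRatio (σ : ℕ → ℝ) (j : ℕ) : ℝ := ⨅ k : ℕ, σ (j + k) / σ k

noncomputable def upperRatio (σ : ℕ → ℝ) (j : ℕ) : ℝ := ⨆ k : ℕ, σ (j + k) / σ k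

/-- `s` is the lower Boyd index of `σ`. -/
def IsLowerBoyd (σ : ℕ → ℝ) (s : ℝ) : Prop :=
  Filter.Tendsto (fun j : ℕ => Real.logb 2 (lowerRatio σ j) / j) Filter.atTop (nhds s)

/-- `s` is the upper Boyd index of `σ`. -/
def IsUpperBoyd (σ : ℕ → ℝ) (s : ℝ) : Prop :=
  Filter.Tendsto (fun j : ℕ => Real.logb 2 (upperRatio σ j) / j) Filter.atTop (nhds s)

/-- First finite difference with step `h`. -/
def fdiff {E : Type*} [Add E] (h : E) (f : E → ℝ) : E → ℝ := fun x => f (x + h) - f x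

/-- Iterated partial derivative `D^α` of a multivariate polynomial. -/
noncomputable def pderivMulti {d : ℕ} (α : Fin d → ℕ) (P : MvPolynomial (Fin d) ℝ) :
    MvPolynomial (Fin d) ℝ :=
  ((List.finRange d).foldr
    (fun i F => (fun Q => MvPolynomial.pderiv i Q)^[α i] ∘ F) id) P

/-- The `L^p(B(x₀, 2^{-j}))` distance between `f` and a polynomial `P`. -/
noncomputable def errNorm {d : ℕ} (f : EuclideanSpace ℝ (Fin d) → ℝ)
    (P : MvPolynomial (Fin d) ℝ) (p : ℝ≥0∞) (x₀ : EuclideanSpace ℝ (Fin d)) (j : ℕ) : ℝ :=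
  (eLpNorm (fun x => f x - MvPolynomial.eval (fun i => x i) P) p
    (volume.restrict (Metric.ball x₀ ((2:ℝ) ^ (-(j : ℝ)))))).toReal

/-- `f` is locally in `L^p`. -/
def LocMemLp {d : ℕ} (f : EuclideanSpace ℝ (Fin d) → ℝ) (p : ℝ≥0∞) : Prop :=
  ∀ R > (0:ℝ), MemLp f p (volume.restrict (Metric.ball (0 : EuclideanSpace ℝ (Fin d)) R))

/-- The supremum over `|h| ≤ 2^{-j}` of `L^p` norms of the `(n+1)`-st finite difference
of `f` over `B_h(x₀, 2^{-j}) = {x : [x, x+(n+1)h] ⊆ B(x₀, 2^{-j})}`. -/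
noncomputable def diffQuantity {d : ℕ} (f : EuclideanSpace ℝ (Fin d) → ℝ) (p : ℝ≥0∞)
    (n : ℕ) (x₀ : EuclideanSpace ℝ (Fin d)) (j : ℕ) : ℝ :=
  ⨆ h ∈ Metric.closedBall (0 : EuclideanSpace ℝ (Fin d)) ((2:ℝ) ^ (-(j : ℝ))),
    (eLpNorm ((fdiff h)^[n + 1] f) p
      (volume.restrict {x | segment ℝ x (x + (n + 1) • h) ⊆
        Metric.ball x₀ ((2:ℝ) ^ (-(j : ℝ)))})).toReal

/-!
A polynomial of total degree at most `n` restricts to every line as a one-variable polynomial of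
degree at most `n`, so it is annihilated by `Δ_h^{n+1}`; hence `Δ_h^{n+1} f = Δ_h^{n+1} (f - P_j)`.
Expanding `Δ_h^{n+1} g (x) = ∑ₖ (-1)^{n+1-k} C(n+1,k) g(x + k h)`, every point `x + k h` with
`x ∈ B_h(x₀, 2^{-j})` lies in `B(x₀, 2^{-j})`, so translation invariance of Lebesgue measure gives
`‖Δ_h^{n+1} f‖_{L^p(B_h)} ≤ 2^{n+1} ‖f - P_j‖_{L^p(B)}`. The sequence is therefore dominated by
`2^{n+1} ε_j`.
-/

open Finset

lemma fdiff_eq_fwdDiff {M : Type*} [AddCommMonoid M] :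
    (fdiff : M → (M → ℝ) → M → ℝ) = fwdDiff := rfl

lemma fwdDiff_iter_apply_eq_fwdDiff_iter_line {R M G : Type*} [CommRing R] [AddCommGroup M]
    [Module R M] [AddCommGroup G] (F : M → G) (h x : M) (m : ℕ) :
    (fwdDiff h)^[m] F x = (fwdDiff (1 : R))^[m] (fun t : R => F (x + t • h)) 0 := by
  simp [fwdDiff_iter_eq_sum_shift, Nat.cast_smul_eq_nsmul]

namespace MvPolynomial

variable {σ R M : Type*} [CommRing R] [AddCommGroup M] [Module R M]

lemma eval_add_smul_eq_eval_aeval (Q : MvPolynomial σ R) (x h : σ → R) (t : R) :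
    eval (x + t • h) Q =
      (aeval (fun i => Polynomial.C (h i) * Polynomial.X + Polynomial.C (x i)) Q).eval t := by
  rw [← Polynomial.coe_aeval_eq_eval, comp_aeval_apply, ← coe_aeval_eq_eval]
  have hline : x + t • h =
      fun i => Polynomial.aeval t (Polynomial.C (h i) * Polynomial.X + Polynomial.C (x i)) := by
    ext i
    simp only [Pi.add_apply, Pi.smul_apply, smul_eq_mul, map_add, map_mul, Polynomial.aeval_C,
      Polynomial.aeval_X, Algebra.algebraMap_self, RingHom.id_apply]
    ring
  rw [hline]
  rfl

theorem fwdDiff_iter_eval_comp_eq_zero {Q : MvPolynomial σ R} {m : ℕ} (hQ : Q.totalDegree < m)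
    (ℓ : M →ₗ[R] σ → R) (h : M) : (fwdDiff h)^[m] (fun y => eval (ℓ y) Q) = 0 := by
  funext x
  rw [fwdDiff_iter_apply_eq_fwdDiff_iter_line (R := R)]
  simp_rw [map_add, map_smul, eval_add_smul_eq_eval_aeval]
  rw [Polynomial.fwdDiff_iter_eq_zero_of_degree_lt]
  · rfl
  · calc _ ≤ Q.totalDegree * 1 :=
          aeval_natDegree_le Q le_rfl _ fun _ => Polynomial.natDegree_linear_le
      _ < m := by rwa [mul_one]

end MvPolynomial

lemma add_nsmul_mem_of_segment_subset {E : Type*} [AddCommGroup E] [Module ℝ E] {x h : E}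
    {m k : ℕ} {t : Set E} (hxt : segment ℝ x (x + m • h) ⊆ t) (hk : k ≤ m) : x + k • h ∈ t := by
  rcases eq_or_ne m 0 with rfl | hm
  · obtain rfl := Nat.le_zero.mp hk
    simpa using hxt (left_mem_segment ℝ _ _)
  apply hxt
  rw [segment_eq_image']
  refine ⟨k / m, ⟨by positivity, div_le_one_of_le₀ (by exact_mod_cast hk) (by positivity)⟩, ?_⟩
  dsimp only
  rw [add_sub_cancel_left, ← Nat.cast_smul_eq_nsmul ℝ, ← Nat.cast_smul_eq_nsmul ℝ, smul_smul,
    div_mul_cancel₀ _ (by exact_mod_cast hm)]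

section Translation

variable {G E : Type*} [MeasurableSpace G] [AddCommGroup G] [MeasurableAdd G] {μ : Measure G}
  [μ.IsAddRightInvariant] [NormedAddCommGroup E] {g : G → E} {s t : Set G} {v : G}

lemma aestronglyMeasurable_comp_add_right_restrict (hst : ∀ x ∈ s, x + v ∈ t)
    (hg : AEStronglyMeasurable g (μ.restrict t)) :
    AEStronglyMeasurable (fun x => g (x + v)) (μ.restrict s) :=
  (hg.comp_measurePreserving ((measurePreserving_add_right μ v).restrict_preimage_emb
    (measurableEmbedding_addRight v) t)).mono_measure (Measure.restrict_mono hst le_rfl)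

lemma eLpNorm_comp_add_right_restrict_le (hst : ∀ x ∈ s, x + v ∈ t) (p : ℝ≥0∞) :
    eLpNorm (fun x => g (x + v)) p (μ.restrict s) ≤ eLpNorm g p (μ.restrict t) := by
  have hT := (measurePreserving_add_right μ v).restrict_preimage_emb
    (measurableEmbedding_addRight v) t
  calc _ ≤ eLpNorm (g ∘ (· + v)) p (μ.restrict ((· + v) ⁻¹' t)) :=
        eLpNorm_mono_measure _ (Measure.restrict_mono hst le_rfl)
    _ = eLpNorm g p (μ.restrict t) := by
        rw [← (measurableEmbedding_addRight v).eLpNorm_map_measure, hT.map_eq]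

theorem eLpNorm_fwdDiff_iter_restrict_le {p : ℝ≥0∞} (hp : 1 ≤ p) {m : ℕ}
    (hg : AEStronglyMeasurable g (μ.restrict t)) (hst : ∀ x ∈ s, ∀ k ≤ m, x + k • v ∈ t) :
    eLpNorm ((fwdDiff v)^[m] g) p (μ.restrict s) ≤ 2 ^ m * eLpNorm g p (μ.restrict t) := by
  set c : ℕ → ℤ := fun k => (-1) ^ (m - k) * m.choose k
  have hnewton : (fwdDiff v)^[m] g = ∑ k ∈ range (m + 1), c k • fun x => g (x + k • v) := by
    ext x
    simp [fwdDiff_iter_eq_sum_shift, c]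
  have hshift : ∀ k ∈ range (m + 1), ∀ x ∈ s, x + k • v ∈ t := fun k hk x hx =>
    hst x hx k (Nat.lt_succ_iff.mp (mem_range.mp hk))
  calc eLpNorm ((fwdDiff v)^[m] g) p (μ.restrict s)
      ≤ ∑ k ∈ range (m + 1), eLpNorm (c k • fun x => g (x + k • v)) p (μ.restrict s) := by
        rw [hnewton]
        exact eLpNorm_sum_le (fun k hk =>
          (aestronglyMeasurable_comp_add_right_restrict (hshift k hk) hg).const_smul _) hp
    _ ≤ ∑ k ∈ range (m + 1), (m.choose k : ℝ≥0∞) * eLpNorm g p (μ.restrict t) := by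
        refine sum_le_sum fun k hk => ?_
        calc eLpNorm (c k • fun x => g (x + k • v)) p (μ.restrict s)
            ≤ (m.choose k : ℝ≥0) • eLpNorm (fun x => g (x + k • v)) p (μ.restrict s) := by
              refine eLpNorm_le_nnreal_smul_eLpNorm_of_ae_le_mul (ae_of_all _ fun x => ?_) p
              simpa [c] using nnnorm_zsmul_le (c k) (g (x + k • v))
          _ ≤ (m.choose k : ℝ≥0∞) * eLpNorm g p (μ.restrict t) := by
              rw [ENNReal.smul_def, smul_eq_mul, ENNReal.coe_natCast]
              exact mul_le_mul_right (eLpNorm_comp_add_right_restrict_le (hshift k hk) p) _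
    _ = 2 ^ m * eLpNorm g p (μ.restrict t) := by
        rw [← sum_mul, ← Nat.cast_sum, Nat.sum_range_choose]
        push_cast
        rfl

end Translation

lemma LocMemLp.memLp_restrict_of_isBounded {d : ℕ} {f : EuclideanSpace ℝ (Fin d) → ℝ} {p : ℝ≥0∞}
    (hf : LocMemLp f p) {s : Set (EuclideanSpace ℝ (Fin d))} (hs : Bornology.IsBounded s) :
    MemLp f p (volume.restrict s) := by
  obtain ⟨R, hR, hsR⟩ := hs.subset_ball_lt 0 0
  exact (hf R hR).mono_measure (Measure.restrict_mono hsR le_rfl)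

lemma Continuous.memLp_restrict_of_isBounded {X E : Type*} [PseudoMetricSpace X] [ProperSpace X]
    [MeasurableSpace X] [OpensMeasurableSpace X] {μ : Measure X} [IsFiniteMeasureOnCompacts μ]
    [NormedAddCommGroup E] {g : X → E} (hg : Continuous g) {s : Set X}
    (hs : Bornology.IsBounded s) (p : ℝ≥0∞) : MemLp g p (μ.restrict s) := by
  have hK : IsCompact (closure s) := hs.isCompact_closure
  have : IsFiniteMeasure (μ.restrict (closure s)) := ⟨by simpa using hK.measure_lt_top⟩
  obtain ⟨C, hC⟩ := hK.exists_bound_of_continuousOn hg.continuousOn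
  refine (MemLp.of_bound hg.aestronglyMeasurable C ?_).mono_measure
    (Measure.restrict_mono subset_closure le_rfl)
  exact (ae_restrict_iff' isClosed_closure.measurableSet).2 (ae_of_all _ hC)

theorem diffQuantity_le_two_pow_mul_errNorm {d : ℕ} {p : ℝ≥0∞} (hp : 1 ≤ p)
    {f : EuclideanSpace ℝ (Fin d) → ℝ} (hf : LocMemLp f p) {Q : MvPolynomial (Fin d) ℝ} {n : ℕ}
    (hQ : Q.totalDegree ≤ n) (x₀ : EuclideanSpace ℝ (Fin d)) (j : ℕ) :
    diffQuantity f p n x₀ j ≤ 2 ^ (n + 1) * errNorm f Q p x₀ j := by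
  set B := ball x₀ ((2 : ℝ) ^ (-(j : ℝ)))
  set P : EuclideanSpace ℝ (Fin d) → ℝ := fun x => MvPolynomial.eval (fun i => x i) Q
  have hP : Continuous P :=
    (MvPolynomial.continuous_eval Q).comp (PiLp.continuous_ofLp 2 fun _ => ℝ)
  have hg : MemLp (f - P) p (volume.restrict B) :=
    (hf.memLp_restrict_of_isBounded isBounded_ball).sub
      (hP.memLp_restrict_of_isBounded isBounded_ball p)
  have herr : 0 ≤ errNorm f Q p x₀ j := ENNReal.toReal_nonneg
  refine Real.iSup_le (fun h => Real.iSup_le (fun _ => ?_) (by positivity)) (by positivity)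
  have hPdiff : (fwdDiff h)^[n + 1] P = 0 :=
    MvPolynomial.fwdDiff_iter_eval_comp_eq_zero (Nat.lt_succ_of_le hQ)
      (WithLp.linearEquiv 2 ℝ (Fin d → ℝ)).toLinearMap h
  have hfdiff : (fdiff h)^[n + 1] f = (fwdDiff h)^[n + 1] (f - P) := by
    rw [fdiff_eq_fwdDiff, ← add_zero ((fwdDiff h)^[n + 1] (f - P)), ← hPdiff, ← fwdDiff_iter_add,
      sub_add_cancel]
  rw [hfdiff]
  calc _ ≤ (2 ^ (n + 1) * eLpNorm (f - P) p (volume.restrict B)).toReal :=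
        ENNReal.toReal_mono (ENNReal.mul_ne_top (by simp) hg.eLpNorm_ne_top) <|
          eLpNorm_fwdDiff_iter_restrict_le hp hg.1 fun _ hx _ hk =>
            add_nsmul_mem_of_segment_subset hx hk
    _ = 2 ^ (n + 1) * errNorm f Q p x₀ j := by
        rw [ENNReal.toReal_mul, ENNReal.toReal_pow, ENNReal.toReal_ofNat]
        rfl

theorem poly_approx_implies_finite_difference_general (d : ℕ) (p q : ℝ≥0∞)
    (hp : 1 ≤ p)
    (f : EuclideanSpace ℝ (Fin d) → ℝ) (hf : LocMemLp f p)
    (x₀ : EuclideanSpace ℝ (Fin d)) (σ : ℕ → ℝ) (hσ : Admissible σ)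
    (n : ℕ)
    (P : ℕ → MvPolynomial (Fin d) ℝ) (hdeg : ∀ j, (P j).totalDegree ≤ n)
    (ε : ℕ → ℝ) (hε : Memℓp ε q)
    (hb : ∀ j : ℕ, σ j * (2:ℝ) ^ ((j : ℝ) * d / p.toReal) * errNorm f (P j) p x₀ j ≤ ε j) :
    Memℓp (fun j : ℕ =>
      σ j * (2:ℝ) ^ ((j : ℝ) * d / p.toReal) * diffQuantity f p n x₀ j) q := by
  refine (hε.const_mul (2 ^ (n + 1))).mono fun j => ?_
  have hσj : 0 < σ j := hσ.1 j
  have hdiff := diffQuantity_le_two_pow_mul_errNorm hp hf (hdeg j) x₀ j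
  have hdiff_nonneg : 0 ≤ diffQuantity f p n x₀ j :=
    Real.iSup_nonneg fun _ => Real.iSup_nonneg fun _ => ENNReal.toReal_nonneg
  rw [Real.norm_of_nonneg (by positivity)]
  calc _ ≤ σ j * (2:ℝ) ^ ((j : ℝ) * d / p.toReal) * (2 ^ (n + 1) * errNorm f (P j) p x₀ j) := by
        gcongr
    _ = 2 ^ (n + 1) * (σ j * (2:ℝ) ^ ((j : ℝ) * d / p.toReal) * errNorm f (P j) p x₀ j) := by
        ring
    _ ≤ 2 ^ (n + 1) * ε j := by gcongr; exact hb j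

/-- polynomial approximation implies the finite-difference condition
defining `T^σ_{p,q}(x₀)`. -/
theorem poly_approx_implies_finite_difference (d : ℕ) (p q : ℝ≥0∞)
    (hp : 1 ≤ p) (hq : 1 ≤ q)
    (f : EuclideanSpace ℝ (Fin d) → ℝ) (hf : LocMemLp f p)
    (x₀ : EuclideanSpace ℝ (Fin d)) (σ : ℕ → ℝ) (hσ : Admissible σ)
    (sl su : ℝ) (hl : IsLowerBoyd σ sl) (hu : IsUpperBoyd σ su) (hsl : 0 < sl)
    (n : ℕ) (hn : n = Nat.floor su)
    (P : ℕ → MvPolynomial (Fin d) ℝ) (hdeg : ∀ j, (P j).totalDegree ≤ n)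
    (ε : ℕ → ℝ) (hε : Memℓp ε q)
    (hb : ∀ j : ℕ, σ j * (2:ℝ) ^ ((j : ℝ) * d / p.toReal) * errNorm f (P j) p x₀ j ≤ ε j) :
    Memℓp (fun j : ℕ =>
      σ j * (2:ℝ) ^ ((j : ℝ) * d / p.toReal) * diffQuantity f p n x₀ j) q :=
  poly_approx_implies_finite_difference_general d p q hp f hf x₀ σ hσ n P hdeg ε hε hb
end

section
/- Let σ be an admissible sequence, u > s̄(σ) + d, q ∈ [1,∞], and let φ : (0,∞) → [0,∞) be nondecreasing. Suppose (ε_j) ∈ ℓ^q satisfies φ(2^{−j}) ≤ 2^{−jd}ε_jσ_j^{−1} for all j ∈ ℕ, and φ(r) ≤ C r^{d+s̄(σ)} for r ≥ 1. Then there exists (θ_j) ∈ ℓ^q such that for all r ≥ 1 and all j: φ(r)/r^u + u∫_{2^{−j}}^r φ(ρ)/ρ^{u+1} dρ ≤ 2^{j(u−d)} θ_j σ_j^{−1}. -/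
open MeasureTheory Filter Metric Topology
open scoped ENNReal NNReal

lemma sum_pow_succ_le {c : ℝ} (hc0 : 0 ≤ c) (hc1 : c < 1) (n : ℕ) :
    ∑ i ∈ Finset.range n, c ^ (i + 1) ≤ (1 - c)⁻¹ := by
  have h1 : ∑ i ∈ Finset.range n, c ^ (i + 1) ≤ ∑ i ∈ Finset.range n, c ^ i := by
    apply Finset.sum_le_sum
    intro i _
    exact pow_le_pow_of_le_one hc0 hc1.le (Nat.le_succ i)
  refine h1.trans ?_
  calc ∑ i ∈ Finset.range n, c ^ i
      ≤ ∑' i : ℕ, c ^ i := Summable.sum_le_tsum _ (fun i _ => pow_nonneg hc0 i)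
        (summable_geometric_of_lt_one hc0 hc1)
    _ = (1 - c)⁻¹ := tsum_geometric_of_lt_one hc0 hc1

lemma geom_tail_sum_le {c : ℝ} (hc0 : 0 ≤ c) (hc1 : c < 1) (j : ℕ) :
    ∑ m ∈ Finset.range j, c ^ (j - m) ≤ (1 - c)⁻¹ := by
  have h1 : ∑ m ∈ Finset.range j, c ^ (j - m) = ∑ i ∈ Finset.range j, c ^ (i + 1) := by
    rw [← Finset.sum_range_reflect (fun i => c ^ (i + 1)) j]
    apply Finset.sum_congr rfl
    intro m hm
    rw [Finset.mem_range] at hm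
    congr 1
    omega
  rw [h1]
  exact sum_pow_succ_le hc0 hc1 j

lemma memℓp_mono {q : ℝ≥0∞} (hq : 1 ≤ q) {f g : ℕ → ℝ} (hg : Memℓp g q)
    (h : ∀ j, ‖f j‖ ≤ ‖g j‖) : Memℓp f q := by
  rcases eq_or_ne q ∞ with rfl | hq'
  · rw [memℓp_infty_iff] at hg ⊢
    obtain ⟨M, hM⟩ := hg
    refine ⟨M, ?_⟩
    rintro x ⟨i, rfl⟩
    exact (h i).trans (hM ⟨i, rfl⟩)
  · have ht : 0 < q.toReal := ENNReal.toReal_pos (zero_lt_one.trans_le hq).ne' hq'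
    apply memℓp_gen
    exact Summable.of_nonneg_of_le (fun i => Real.rpow_nonneg (norm_nonneg _) _)
      (fun i => Real.rpow_le_rpow (norm_nonneg _) (h i) ht.le)
      ((memℓp_gen_iff ht).1 hg)

lemma memℓp_geometric {q : ℝ≥0∞} (hq : 1 ≤ q) {c : ℝ} (hc0 : 0 ≤ c) (hc1 : c < 1) :
    Memℓp (fun j : ℕ => c ^ j) q := by
  rcases eq_or_ne q ∞ with rfl | hq'
  · apply memℓp_infty
    refine ⟨1, ?_⟩
    rintro x ⟨i, rfl⟩
    simp only [Real.norm_eq_abs, abs_of_nonneg (pow_nonneg hc0 i)]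
    exact pow_le_one₀ hc0 hc1.le
  · have ht : 0 < q.toReal := ENNReal.toReal_pos (zero_lt_one.trans_le hq).ne' hq'
    apply memℓp_gen
    have key : ∀ j : ℕ, ‖c ^ j‖ ^ q.toReal = (c ^ q.toReal) ^ j := by
      intro j
      rw [Real.norm_eq_abs, abs_of_nonneg (pow_nonneg hc0 j), ← Real.rpow_natCast c j,
        ← Real.rpow_mul hc0, mul_comm, Real.rpow_mul hc0, Real.rpow_natCast]
    simp only [key]
    exact summable_geometric_of_lt_one (Real.rpow_nonneg hc0 _)
      (Real.rpow_lt_one hc0 hc1 ht)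

lemma conv_memℓp {q : ℝ≥0∞} (hq : 1 ≤ q) {b : ℕ → ℝ} (hb : Memℓp b q)
    (hbnn : ∀ n, 0 ≤ b n) {c : ℝ} (hc0 : 0 ≤ c) (hc1 : c < 1) :
    Memℓp (fun j : ℕ => ∑ m ∈ Finset.range j, c ^ (j - m) * b m) q := by
  set K : ℝ := (1 - c)⁻¹ with hK
  have hK0 : 0 ≤ K := inv_nonneg.2 (by linarith)
  have hξnn : ∀ j, 0 ≤ ∑ m ∈ Finset.range j, c ^ (j - m) * b m := fun j =>
    Finset.sum_nonneg fun m _ => mul_nonneg (pow_nonneg hc0 _) (hbnn m)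
  rcases eq_or_ne q ∞ with rfl | hq'
  · rw [memℓp_infty_iff] at hb ⊢
    obtain ⟨M, hM⟩ := hb
    have hM' : ∀ n, b n ≤ M := by
      intro n
      have h2 : ‖b n‖ ≤ M := hM ⟨n, rfl⟩
      rw [Real.norm_eq_abs] at h2
      exact (le_abs_self _).trans h2
    have hM0 : 0 ≤ M := (hbnn 0).trans (hM' 0)
    refine ⟨K * M, ?_⟩
    rintro x ⟨j, rfl⟩
    simp only [Real.norm_eq_abs, abs_of_nonneg (hξnn j)]
    calc ∑ m ∈ Finset.range j, c ^ (j - m) * b m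
        ≤ ∑ m ∈ Finset.range j, c ^ (j - m) * M :=
          Finset.sum_le_sum fun m _ => mul_le_mul_of_nonneg_left (hM' m) (pow_nonneg hc0 _)
      _ = (∑ m ∈ Finset.range j, c ^ (j - m)) * M := by rw [Finset.sum_mul]
      _ ≤ K * M := mul_le_mul_of_nonneg_right (geom_tail_sum_le hc0 hc1 j) hM0
  · have hq0 : 0 < q.toReal := ENNReal.toReal_pos (zero_lt_one.trans_le hq).ne' hq'
    set t : ℝ := q.toReal with htdef
    have ht1 : 1 ≤ t := by
      rw [htdef, ← ENNReal.toReal_one]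
      exact ENNReal.toReal_mono hq' hq
    have hBsumm : Summable (fun m => b m ^ t) := by
      have := (memℓp_gen_iff hq0).1 hb
      refine this.congr fun m => ?_
      rw [Real.norm_eq_abs, abs_of_nonneg (hbnn m)]
    have hBnn : ∀ m, 0 ≤ b m ^ t := fun m => Real.rpow_nonneg (hbnn m) t
    -- the inner weighted sums
    set S : ℕ → ℝ := fun j => ∑ m ∈ Finset.range j, c ^ (j - m) * b m ^ t with hS
    have hSnn : ∀ j, 0 ≤ S j := fun j =>
      Finset.sum_nonneg fun m _ => mul_nonneg (pow_nonneg hc0 _) (hBnn m)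
    -- Summability of S via partial sums
    have hSsum : Summable S := by
      apply summable_of_sum_range_le (c := K * ∑' m, b m ^ t) hSnn
      intro J
      have swap : ∑ j ∈ Finset.range J, S j
          = ∑ i ∈ Finset.range J, ∑ j ∈ Finset.Ico (i + 1) J, c ^ (j - i) * b i ^ t := by
        have h3 := Finset.sum_Ico_Ico_comm' 0 J (fun i j => c ^ (j - i) * b i ^ t)
        simp only [← Finset.range_eq_Ico] at h3
        exact h3.symm
      rw [swap]
      calc ∑ i ∈ Finset.range J, ∑ j ∈ Finset.Ico (i + 1) J, c ^ (j - i) * b i ^ t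
          = ∑ i ∈ Finset.range J, (∑ j ∈ Finset.Ico (i + 1) J, c ^ (j - i)) * b i ^ t := by
            apply Finset.sum_congr rfl; intro i _; rw [Finset.sum_mul]
        _ ≤ ∑ i ∈ Finset.range J, K * b i ^ t := by
            apply Finset.sum_le_sum
            intro i _
            apply mul_le_mul_of_nonneg_right _ (hBnn i)
            rw [Finset.sum_Ico_eq_sum_range]
            have : ∀ k ∈ Finset.range (J - (i+1)), c ^ (i + 1 + k - i) = c ^ (k + 1) := by
              intro k _; congr 1; omega
            rw [Finset.sum_congr rfl this]
            exact sum_pow_succ_le hc0 hc1 _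
        _ = K * ∑ i ∈ Finset.range J, b i ^ t := by rw [Finset.mul_sum]
        _ ≤ K * ∑' m, b m ^ t := by
            apply mul_le_mul_of_nonneg_left _ hK0
            exact Summable.sum_le_tsum _ (fun i _ => hBnn i) hBsumm
    apply memℓp_gen
    have key : ∀ j, ‖∑ m ∈ Finset.range j, c ^ (j - m) * b m‖ ^ t ≤ K ^ (t - 1) * S j := by
      intro j
      rw [Real.norm_eq_abs, abs_of_nonneg (hξnn j)]
      have hold := Real.inner_le_weight_mul_Lp_of_nonneg (Finset.range j) ht1
        (fun m => c ^ (j - m)) b (fun m => pow_nonneg hc0 _) hbnn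
      have hwnn : 0 ≤ ∑ m ∈ Finset.range j, c ^ (j - m) :=
        Finset.sum_nonneg fun m _ => pow_nonneg hc0 _
      have ht0 : t ≠ 0 := by positivity
      calc (∑ m ∈ Finset.range j, c ^ (j - m) * b m) ^ t
          ≤ ((∑ m ∈ Finset.range j, c ^ (j - m)) ^ (1 - t⁻¹) * S j ^ t⁻¹) ^ t := by
            apply Real.rpow_le_rpow (hξnn j) hold (by positivity)
        _ = ((∑ m ∈ Finset.range j, c ^ (j - m)) ^ (1 - t⁻¹)) ^ t * (S j ^ t⁻¹) ^ t := by
            rw [Real.mul_rpow (Real.rpow_nonneg hwnn _) (Real.rpow_nonneg (hSnn j) _)]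
        _ = (∑ m ∈ Finset.range j, c ^ (j - m)) ^ (t - 1) * S j := by
            rw [← Real.rpow_mul hwnn, ← Real.rpow_mul (hSnn j), inv_mul_cancel₀ ht0,
              Real.rpow_one]
            congr 2
            field_simp
        _ ≤ K ^ (t - 1) * S j := by
            apply mul_le_mul_of_nonneg_right _ (hSnn j)
            exact Real.rpow_le_rpow hwnn (geom_tail_sum_le hc0 hc1 j) (by linarith)
    exact Summable.of_nonneg_of_le (fun j => Real.rpow_nonneg (norm_nonneg _) _) key
      (hSsum.mul_left _)

lemma admissible_growth (σ : ℕ → ℝ) (hσ : Admissible σ) (su : ℝ) (hsu : IsUpperBoyd σ su)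
    {a : ℝ} (ha : su < a) :
    ∃ A : ℝ, 1 ≤ A ∧ ∀ m k : ℕ, σ (m + k) ≤ A * (2:ℝ) ^ ((m:ℝ) * a) * σ k := by
  obtain ⟨hpos, C, hC0, hC⟩ := hσ
  set C' : ℝ := max C 1 with hC'def
  have hC'1 : 1 ≤ C' := le_max_right _ _
  have step : ∀ j, σ (j + 1) ≤ C' * σ j := fun j =>
    (hC j).2.trans (mul_le_mul_of_nonneg_right (le_max_left _ _) (hpos j).le)
  have powbound : ∀ m k, σ (m + k) ≤ C' ^ m * σ k := by
    intro m
    induction m with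
    | zero => intro k; simp
    | succ n ih =>
      intro k
      have h1 : n + 1 + k = (n + k) + 1 := by omega
      rw [h1]
      calc σ ((n + k) + 1) ≤ C' * σ (n + k) := step _
        _ ≤ C' * (C' ^ n * σ k) := by
            apply mul_le_mul_of_nonneg_left (ih k) (by linarith)
        _ = C' ^ (n + 1) * σ k := by ring
  have bdd : ∀ m, BddAbove (Set.range fun k => σ (m + k) / σ k) := by
    intro m
    refine ⟨C' ^ m, ?_⟩
    rintro x ⟨k, rfl⟩
    rw [div_le_iff₀ (hpos k)]
    exact powbound m k
  have hub : ∀ m k, σ (m + k) / σ k ≤ upperRatio σ m := fun m k => le_ciSup (bdd m) k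
  have hRpos : ∀ m, 0 < upperRatio σ m := by
    intro m
    have h0 := hub m 0
    have : 0 < σ (m + 0) / σ 0 := div_pos (hpos _) (hpos 0)
    linarith
  have ev : ∀ᶠ m : ℕ in atTop, Real.logb 2 (upperRatio σ m) / m < a :=
    hsu.eventually_lt_const ha
  obtain ⟨N, hN⟩ := eventually_atTop.1 ev
  set M : ℕ := max N 1 with hMdef
  have hR2 : ∀ m : ℕ, M ≤ m → upperRatio σ m ≤ (2:ℝ) ^ ((m:ℝ) * a) := by
    intro m hm
    have hm1 : 1 ≤ m := le_trans (le_max_right N 1) hm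
    have hmpos : (0:ℝ) < m := by exact_mod_cast hm1
    have h1 := hN m (le_trans (le_max_left N 1) hm)
    rw [div_lt_iff₀ hmpos] at h1
    rw [← Real.logb_le_iff_le_rpow one_lt_two (hRpos m)]
    linarith [mul_comm a (m:ℝ)]
  set A : ℝ := max (C' ^ M * (2:ℝ) ^ ((M:ℝ) * |a|)) 1 with hAdef
  refine ⟨A, le_max_right _ _, ?_⟩
  intro m k
  rcases le_or_gt M m with hm | hm
  · have h1 : σ (m + k) ≤ upperRatio σ m * σ k := by
      rw [← div_le_iff₀ (hpos k)]
      exact hub m k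
    calc σ (m + k) ≤ upperRatio σ m * σ k := h1
      _ ≤ (2:ℝ) ^ ((m:ℝ) * a) * σ k :=
          mul_le_mul_of_nonneg_right (hR2 m hm) (hpos k).le
      _ = 1 * ((2:ℝ) ^ ((m:ℝ) * a) * σ k) := by ring
      _ ≤ A * ((2:ℝ) ^ ((m:ℝ) * a) * σ k) := by
          apply mul_le_mul_of_nonneg_right (le_max_right _ _)
          exact mul_nonneg (Real.rpow_pos_of_pos two_pos _).le (hpos k).le
      _ = A * (2:ℝ) ^ ((m:ℝ) * a) * σ k := by ring
  · -- m < M : use the crude bound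
    have hCm : σ (m + k) ≤ C' ^ m * σ k := powbound m k
    have key : C' ^ m ≤ A * (2:ℝ) ^ ((m:ℝ) * a) := by
      have h1 : C' ^ m ≤ C' ^ M := pow_le_pow_right₀ hC'1 hm.le
      have h2 : (2:ℝ) ^ (-((M:ℝ) * |a|)) ≤ (2:ℝ) ^ ((m:ℝ) * a) := by
        apply Real.rpow_le_rpow_of_exponent_le one_le_two
        have hmM : (m:ℝ) ≤ (M:ℝ) := by exact_mod_cast hm.le
        have h3 : -((m:ℝ) * |a|) ≤ (m:ℝ) * a := by
          nlinarith [neg_abs_le a, Nat.cast_nonneg (α := ℝ) m]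
        nlinarith [abs_nonneg a, Nat.cast_nonneg (α := ℝ) m]
      have h4 : C' ^ M * (2:ℝ) ^ ((M:ℝ) * |a|) ≤ A := le_max_left _ _
      have h5 : (0:ℝ) < (2:ℝ) ^ ((M:ℝ) * |a|) := Real.rpow_pos_of_pos two_pos _
      have h6 : C' ^ M = (C' ^ M * (2:ℝ) ^ ((M:ℝ) * |a|)) * (2:ℝ) ^ (-((M:ℝ) * |a|)) := by
        rw [mul_assoc, ← Real.rpow_add two_pos]
        simp
      calc C' ^ m ≤ C' ^ M := h1
        _ = (C' ^ M * (2:ℝ) ^ ((M:ℝ) * |a|)) * (2:ℝ) ^ (-((M:ℝ) * |a|)) := h6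
        _ ≤ A * (2:ℝ) ^ ((m:ℝ) * a) := by
            apply mul_le_mul h4 h2 (Real.rpow_pos_of_pos two_pos _).le
            linarith [le_max_right (C' ^ M * (2:ℝ) ^ ((M:ℝ) * |a|)) (1:ℝ)]
    calc σ (m + k) ≤ C' ^ m * σ k := hCm
      _ ≤ A * (2:ℝ) ^ ((m:ℝ) * a) * σ k :=
          mul_le_mul_of_nonneg_right key (hpos k).le

set_option maxHeartbeats 1000000 in
/-- bound on the weighted tail of a nondecreasing mass function `φ`. -/
theorem weighted_tail_bound (d : ℕ) (σ : ℕ → ℝ) (hσ : Admissible σ)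
    (su : ℝ) (hsu : IsUpperBoyd σ su) (u : ℝ) (hu : su + d < u)
    (q : ℝ≥0∞) (hq : 1 ≤ q) (ε : ℕ → ℝ) (hε : Memℓp ε q)
    (φ : ℝ → ℝ) (hmono : MonotoneOn φ (Set.Ioi (0:ℝ))) (hnn : ∀ r > (0:ℝ), 0 ≤ φ r)
    (hdya : ∀ j : ℕ, φ ((2:ℝ) ^ (-(j : ℝ))) ≤ (2:ℝ) ^ (-(j : ℝ) * d) * ε j / σ j)
    (hlarge : ∃ C > (0:ℝ), ∀ r ≥ (1:ℝ), φ r ≤ C * r ^ (d + su)) :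
    ∃ θ : ℕ → ℝ, Memℓp θ q ∧ ∀ r ≥ (1:ℝ), ∀ j : ℕ,
      φ r / r ^ u + u * (∫ ρ in ((2:ℝ) ^ (-(j : ℝ)))..r, φ ρ / ρ ^ (u + 1))
        ≤ (2:ℝ) ^ ((j : ℝ) * (u - d)) * θ j / σ j := by
  obtain ⟨C, hC0, hCbd⟩ := hlarge
  have hpos : ∀ j, 0 < σ j := hσ.1
  set δ : ℝ := (u - d - su) / 2 with hδdef
  have hδ : 0 < δ := by rw [hδdef]; linarith
  have hsu' : su = u - d - 2 * δ := by rw [hδdef]; ring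
  obtain ⟨A, hA1, hA⟩ := admissible_growth σ hσ su hsu (a := su + δ) (by linarith)
  set c : ℝ := (2:ℝ) ^ (-δ) with hcdef
  have hc0 : 0 < c := Real.rpow_pos_of_pos two_pos _
  have hc1 : c < 1 := Real.rpow_lt_one_of_one_lt_of_neg one_lt_two (by linarith)
  -- nonnegativity of ε
  have hεnn : ∀ k : ℕ, 0 ≤ ε k := by
    intro k
    have h1 : 0 ≤ φ ((2:ℝ) ^ (-(k:ℝ))) := hnn _ (Real.rpow_pos_of_pos two_pos _)
    have h2 := (h1.trans (hdya k))
    have h3 : 0 ≤ (2:ℝ) ^ (-(k:ℝ) * d) * ε k := by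
      rcases div_nonneg_iff.mp h2 with ⟨h, _⟩ | ⟨_, h⟩
      · exact h
      · linarith [hpos k]
    by_contra hneg
    push_neg at hneg
    have := mul_neg_of_pos_of_neg (Real.rpow_pos_of_pos two_pos (-(k:ℝ) * d)) hneg
    linarith
  set vb : ℝ := u - d - su with hvbdef
  have hvb0 : 0 < vb := by rw [hvbdef]; linarith
  set B : ℝ := C * (1 + |u| / vb) with hBdef
  have hB0 : 0 < B := by
    apply mul_pos hC0
    have : 0 ≤ |u| / vb := div_nonneg (abs_nonneg u) hvb0.le
    linarith
  have hBC : C ≤ B := by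
    rw [hBdef]
    nlinarith [div_nonneg (abs_nonneg u) hvb0.le]
  set ξ : ℕ → ℝ := fun j => ∑ m ∈ Finset.range j, c ^ (j - m) * ε m with hξdef
  have hξnn : ∀ j, 0 ≤ ξ j := fun j =>
    Finset.sum_nonneg fun m _ => mul_nonneg (pow_nonneg hc0.le _) (hεnn m)
  set θ : ℕ → ℝ := fun j =>
    B * (σ j * (2:ℝ) ^ (-(j:ℝ) * (u - d))) + |u| * (2:ℝ) ^ u * A * ξ j with hθdef
  have hσ0 : 0 < σ 0 := hpos 0
  refine ⟨θ, ?_, ?_⟩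
  · -- Memℓp θ q
    have hpart1 : Memℓp (fun j : ℕ => B * (σ j * (2:ℝ) ^ (-(j:ℝ) * (u - d)))) q := by
      apply memℓp_mono hq ((memℓp_geometric hq hc0.le hc1).const_mul (B * A * σ 0))
      intro j
      have hterm_nn : 0 ≤ B * (σ j * (2:ℝ) ^ (-(j:ℝ) * (u - d))) :=
        mul_nonneg hB0.le (mul_nonneg (hpos j).le (Real.rpow_pos_of_pos two_pos _).le)
      have hcj : (0:ℝ) < c ^ j := pow_pos hc0 j
      rw [Real.norm_eq_abs, Real.norm_eq_abs, abs_of_nonneg hterm_nn,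
        abs_of_nonneg (by positivity : (0:ℝ) ≤ B * A * σ 0 * c ^ j)]
      have hσj : σ j ≤ A * (2:ℝ) ^ ((j:ℝ) * (su + δ)) * σ 0 := by
        have := hA j 0
        simpa using this
      have hcj2 : c ^ j = (2:ℝ) ^ (-δ * (j:ℝ)) := by
        rw [hcdef, ← Real.rpow_natCast ((2:ℝ) ^ (-δ)) j, ← Real.rpow_mul (by norm_num)]
      have hexp : (2:ℝ) ^ ((j:ℝ) * (su + δ)) * (2:ℝ) ^ (-(j:ℝ) * (u - d))
          = (2:ℝ) ^ (-δ * (j:ℝ)) := by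
        rw [← Real.rpow_add two_pos]
        congr 1
        rw [hsu']; ring
      calc B * (σ j * (2:ℝ) ^ (-(j:ℝ) * (u - d)))
          ≤ B * ((A * (2:ℝ) ^ ((j:ℝ) * (su + δ)) * σ 0) * (2:ℝ) ^ (-(j:ℝ) * (u - d))) := by
            apply mul_le_mul_of_nonneg_left _ hB0.le
            exact mul_le_mul_of_nonneg_right hσj (Real.rpow_pos_of_pos two_pos _).le
        _ = B * A * σ 0 * ((2:ℝ) ^ ((j:ℝ) * (su + δ)) * (2:ℝ) ^ (-(j:ℝ) * (u - d))) := by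
            ring
        _ = B * A * σ 0 * c ^ j := by rw [hexp, hcj2]
    have hpart2 : Memℓp (fun j : ℕ => |u| * (2:ℝ) ^ u * A * ξ j) q := by
      exact (conv_memℓp hq hε hεnn hc0.le hc1).const_mul (|u| * (2:ℝ) ^ u * A)
    exact hpart1.add hpart2
  · -- the main estimate
    intro r hr j
    have hr0 : (0:ℝ) < r := lt_of_lt_of_le one_pos hr
    set g : ℕ → ℝ := fun k => (2:ℝ) ^ (-(k:ℝ)) with hgdef
    have hgpos : ∀ k, 0 < g k := fun k => Real.rpow_pos_of_pos two_pos _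
    have hgone : ∀ k, g k ≤ 1 := fun k =>
      Real.rpow_le_one_of_one_le_of_nonpos one_le_two (by simp)
    have hg0 : g 0 = 1 := by rw [hgdef]; simp
    have hgle : ∀ k, g (k + 1) ≤ g k := by
      intro k
      apply Real.rpow_le_rpow_of_exponent_le one_le_two
      push_cast; linarith
    have hgjr : g j ≤ r := (hgone j).trans hr
    set F : ℝ → ℝ := fun ρ => φ ρ / ρ ^ (u + 1) with hFdef
    have hFnn : ∀ x, 0 < x → 0 ≤ F x := fun x hx =>
      div_nonneg (hnn x hx) (Real.rpow_pos_of_pos hx _).le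
    -- integrability on positive intervals
    have hInt : ∀ x y : ℝ, 0 < x → 0 < y → IntervalIntegrable F volume x y := by
      intro x y hx hxy
      have huIcc : Set.uIcc x y ⊆ Set.Ioi (0:ℝ) := by
        intro z hz
        have := Set.mem_uIcc.1 hz
        rcases this with ⟨h1, _⟩ | ⟨h1, _⟩
        · exact lt_of_lt_of_le hx h1
        · exact lt_of_lt_of_le hxy h1
      have h1 : MonotoneOn φ (Set.uIcc x y) := hmono.mono huIcc
      have h2 : IntervalIntegrable φ volume x y := h1.intervalIntegrable
      have h3 : ContinuousOn (fun ρ : ℝ => (ρ ^ (u + 1))⁻¹) (Set.uIcc x y) := by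
        apply ContinuousOn.inv₀
        · exact continuousOn_id.rpow_const fun z hz => Or.inl (ne_of_gt (huIcc hz))
        · intro z hz
          exact ne_of_gt (Real.rpow_pos_of_pos (huIcc hz) _)
      have h4 := h2.mul_continuousOn h3
      simpa [hFdef, div_eq_mul_inv] using h4
    -- convert the goal to use `g` and `F`
    rw [show ((2:ℝ) ^ (-(j:ℝ))) = g j from by simp [hgdef]]
    have hdya' : ∀ k : ℕ, φ (g k) ≤ (2:ℝ) ^ (-(k:ℝ) * d) * ε k / σ k := by
      intro k
      simp only [hgdef]
      exact hdya k
    -- RHS simplification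
    have hTnn : 0 ≤ (2:ℝ) ^ ((j:ℝ) * (u - d)) * ξ j / σ j :=
      div_nonneg (mul_nonneg (Real.rpow_pos_of_pos two_pos _).le (hξnn j)) (hpos j).le
    have hRHS : (2:ℝ) ^ ((j:ℝ) * (u - d)) * θ j / σ j
        = B + |u| * (2:ℝ) ^ u * A * ((2:ℝ) ^ ((j:ℝ) * (u - d)) * ξ j / σ j) := by
      have e1 : (2:ℝ) ^ (-(j:ℝ) * (u - d)) = ((2:ℝ) ^ ((j:ℝ) * (u - d)))⁻¹ := by
        rw [neg_mul, Real.rpow_neg (by norm_num)]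
      have h2 : ((2:ℝ) ^ ((j:ℝ) * (u - d))) ≠ 0 := ne_of_gt (Real.rpow_pos_of_pos two_pos _)
      simp only [hθdef]
      rw [e1]
      field_simp [(hpos j).ne']
    -- first term bound
    have hphir : φ r / r ^ u ≤ C := by
      have h1 : φ r ≤ C * r ^ ((d:ℝ) + su) := hCbd r hr
      have hru : (0:ℝ) < r ^ u := Real.rpow_pos_of_pos hr0 u
      have h2 : φ r / r ^ u ≤ C * r ^ ((d:ℝ) + su) / r ^ u := by gcongr
      have h3 : C * r ^ ((d:ℝ) + su) / r ^ u = C * r ^ ((d:ℝ) + su - u) := by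
        rw [Real.rpow_sub hr0]; ring
      have h4 : r ^ ((d:ℝ) + su - u) ≤ 1 :=
        Real.rpow_le_one_of_one_le_of_nonpos hr (by linarith)
      calc φ r / r ^ u ≤ C * r ^ ((d:ℝ) + su) / r ^ u := h2
        _ = C * r ^ ((d:ℝ) + su - u) := h3
        _ ≤ C * 1 := by nlinarith
        _ = C := mul_one C
    have hIntNonneg : 0 ≤ ∫ ρ in (g j)..r, F ρ := by
      apply intervalIntegral.integral_nonneg hgjr
      intro x hx
      exact hFnn x (lt_of_lt_of_le (hgpos j) hx.1)
    rcases le_or_gt u 0 with hu0 | hu0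
    · -- the case u ≤ 0 : the integral term is nonpositive
      have h1 : u * ∫ ρ in (g j)..r, F ρ ≤ 0 :=
        mul_nonpos_iff.2 (Or.inr ⟨hu0, hIntNonneg⟩)
      rw [hRHS]
      have h2 : 0 ≤ |u| * (2:ℝ) ^ u * A * ((2:ℝ) ^ ((j:ℝ) * (u - d)) * ξ j / σ j) :=
        mul_nonneg (mul_nonneg (mul_nonneg (abs_nonneg u)
          (Real.rpow_pos_of_pos two_pos u).le) (by linarith)) hTnn
      linarith
    · -- the case u > 0
      have hsplit : (∫ ρ in (g j)..r, F ρ)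
          = (∫ ρ in (g j)..(1:ℝ), F ρ) + ∫ ρ in (1:ℝ)..r, F ρ :=
        (intervalIntegral.integral_add_adjacent_intervals
          (hInt (g j) 1 (hgpos j) one_pos) (hInt 1 r one_pos hr0)).symm
      -- bound for the integral over [1, r]
      have hI2 : (∫ ρ in (1:ℝ)..r, F ρ) ≤ C / vb := by
        have hβ : (d:ℝ) + su - (u + 1) = -vb - 1 := by rw [hvbdef]; ring
        have hsub : Set.uIcc (1:ℝ) r ⊆ Set.Ioi (0:ℝ) := by
          rw [Set.uIcc_of_le hr]
          intro z hz
          exact lt_of_lt_of_le one_pos hz.1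
        have hcont : ContinuousOn (fun ρ : ℝ => C * ρ ^ (-vb - 1)) (Set.uIcc 1 r) := by
          apply ContinuousOn.mul continuousOn_const
          exact continuousOn_id.rpow_const fun z hz => Or.inl (ne_of_gt (hsub hz))
        have hint2 : IntervalIntegrable (fun ρ : ℝ => C * ρ ^ (-vb - 1)) volume 1 r :=
          hcont.intervalIntegrable
        have hmono2 : (∫ ρ in (1:ℝ)..r, F ρ) ≤ ∫ ρ in (1:ℝ)..r, C * ρ ^ (-vb - 1) := by
          apply intervalIntegral.integral_mono_on hr (hInt 1 r one_pos hr0) hint2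
          intro x hx
          have hx1 : (1:ℝ) ≤ x := hx.1
          have hx0 : (0:ℝ) < x := lt_of_lt_of_le one_pos hx1
          have h1 : φ x ≤ C * x ^ ((d:ℝ) + su) := hCbd x hx1
          have h2 : F x ≤ C * x ^ ((d:ℝ) + su) / x ^ (u + 1) := by
            simp only [hFdef]
            gcongr
          calc F x ≤ C * x ^ ((d:ℝ) + su) / x ^ (u + 1) := h2
            _ = C * x ^ ((d:ℝ) + su - (u + 1)) := by
                rw [mul_div_assoc, ← Real.rpow_sub hx0]
            _ = C * x ^ (-vb - 1) := by rw [hβ]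
        have hcomp : (∫ ρ in (1:ℝ)..r, C * ρ ^ (-vb - 1)) = C * ((r ^ (-vb) - 1) / (-vb)) := by
          rw [intervalIntegral.integral_const_mul, integral_rpow]
          · norm_num
          · right
            refine ⟨ne_of_lt (by linarith), Set.notMem_uIcc_of_lt one_pos hr0⟩
        have hrn : 0 ≤ r ^ (-vb) := (Real.rpow_pos_of_pos hr0 _).le
        calc (∫ ρ in (1:ℝ)..r, F ρ) ≤ ∫ ρ in (1:ℝ)..r, C * ρ ^ (-vb - 1) := hmono2
          _ = C * ((r ^ (-vb) - 1) / (-vb)) := hcomp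
          _ = C * ((1 - r ^ (-vb)) / vb) := by
              congr 1
              rw [div_neg, ← neg_div]
              congr 1
              ring
          _ ≤ C * (1 / vb) := by
              apply mul_le_mul_of_nonneg_left _ hC0.le
              rw [div_le_div_iff₀ hvb0 hvb0]
              nlinarith [hvb0]
          _ = C / vb := by rw [mul_one_div]
      -- dyadic decomposition of the integral over [2^{-j}, 1]
      have hsum : (∫ ρ in (g j)..(1:ℝ), F ρ)
          = ∑ k ∈ Finset.range j, ∫ ρ in (g (k+1))..(g k), F ρ := by
        have h1 : ∀ (k:ℕ), k < j → IntervalIntegrable F volume (g k) (g (k+1)) :=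
          fun k _ => (hInt (g (k+1)) (g k) (hgpos _) (hgpos _)).symm
        have h2 := intervalIntegral.sum_integral_adjacent_intervals h1
        rw [hg0] at h2
        calc (∫ ρ in (g j)..(1:ℝ), F ρ) = -∫ ρ in (1:ℝ)..(g j), F ρ :=
              intervalIntegral.integral_symm 1 (g j)
          _ = -∑ k ∈ Finset.range j, ∫ ρ in (g k)..(g (k+1)), F ρ := by rw [h2]
          _ = ∑ k ∈ Finset.range j, ∫ ρ in (g (k+1))..(g k), F ρ := by
              rw [← Finset.sum_neg_distrib]
              exact Finset.sum_congr rfl fun k _ => by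
                rw [intervalIntegral.integral_symm (g (k+1)) (g k), neg_neg]
      -- bound for each dyadic piece
      have hpiece : ∀ k : ℕ, (∫ ρ in (g (k+1))..(g k), F ρ)
          ≤ (2:ℝ) ^ u * ((2:ℝ) ^ ((k:ℝ) * (u - d)) * (ε k / σ k)) := by
        intro k
        have hgk1 : (0:ℝ) < g (k+1) := hgpos _
        have hgk : (0:ℝ) < g k := hgpos _
        have hφgk : 0 ≤ φ (g k) := hnn _ hgk
        have h4 : g (k+1) ^ (u+1) = (2:ℝ) ^ (-((k:ℝ)+1) * (u+1)) := by
          have : g (k+1) = (2:ℝ) ^ (-((k:ℝ)+1)) := by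
            simp only [hgdef]
            push_cast
            ring_nf
          rw [this, ← Real.rpow_mul (by norm_num : (0:ℝ) ≤ 2)]
        have hbound : ∀ x ∈ Set.Icc (g (k+1)) (g k),
            F x ≤ φ (g k) * (2:ℝ) ^ (((k:ℝ)+1) * (u+1)) := by
          intro x hx
          have hx0 : 0 < x := lt_of_lt_of_le hgk1 hx.1
          have h1 : φ x ≤ φ (g k) := hmono (Set.mem_Ioi.2 hx0) (Set.mem_Ioi.2 hgk) hx.2
          have h2 : g (k+1) ^ (u+1) ≤ x ^ (u+1) :=
            Real.rpow_le_rpow hgk1.le hx.1 (by linarith)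
          have h3 : F x ≤ φ (g k) / g (k+1) ^ (u+1) := by
            simp only [hFdef]
            exact div_le_div₀ hφgk h1 (Real.rpow_pos_of_pos hgk1 _) h2
          have h5 : φ (g k) / g (k+1) ^ (u+1) = φ (g k) * (2:ℝ) ^ (((k:ℝ)+1) * (u+1)) := by
            rw [h4, neg_mul, Real.rpow_neg (by norm_num : (0:ℝ) ≤ 2), div_eq_mul_inv, inv_inv]
          rw [← h5]
          exact h3
        have hstep : (∫ ρ in (g (k+1))..(g k), F ρ)
            ≤ (g k - g (k+1)) • (φ (g k) * (2:ℝ) ^ (((k:ℝ)+1) * (u+1))) := by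
          rw [← intervalIntegral.integral_const]
          exact intervalIntegral.integral_mono_on (hgle k) (hInt _ _ hgk1 hgk)
            intervalIntegrable_const hbound
        have hdiff : g k - g (k+1) = (2:ℝ) ^ (-((k:ℝ)+1)) := by
          have e1 : g k = (2:ℝ) ^ (1 + -((k:ℝ)+1)) := by
            simp only [hgdef]
            congr 1
            ring
          have e2 : g (k+1) = (2:ℝ) ^ (-((k:ℝ)+1)) := by
            simp only [hgdef]
            push_cast
            ring_nf
          rw [e1, e2, Real.rpow_add two_pos, Real.rpow_one]
          ring
        have hexp1 : (2:ℝ) ^ (((k:ℝ)+1) * (u+1)) * (2:ℝ) ^ (-((k:ℝ)+1))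
            = (2:ℝ) ^ (((k:ℝ)+1) * u) := by
          rw [← Real.rpow_add two_pos]
          congr 1
          ring
        have hexp2 : (2:ℝ) ^ (-(k:ℝ) * d) * (2:ℝ) ^ (((k:ℝ)+1) * u)
            = (2:ℝ) ^ u * (2:ℝ) ^ ((k:ℝ) * (u - d)) := by
          rw [← Real.rpow_add two_pos, ← Real.rpow_add two_pos]
          congr 1
          ring
        calc (∫ ρ in (g (k+1))..(g k), F ρ)
            ≤ (g k - g (k+1)) • (φ (g k) * (2:ℝ) ^ (((k:ℝ)+1) * (u+1))) := hstep
          _ = φ (g k) * ((2:ℝ) ^ (((k:ℝ)+1) * (u+1)) * (2:ℝ) ^ (-((k:ℝ)+1))) := by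
              rw [hdiff, smul_eq_mul]; ring
          _ = φ (g k) * (2:ℝ) ^ (((k:ℝ)+1) * u) := by rw [hexp1]
          _ ≤ ((2:ℝ) ^ (-(k:ℝ) * d) * ε k / σ k) * (2:ℝ) ^ (((k:ℝ)+1) * u) :=
              mul_le_mul_of_nonneg_right (hdya' k) (Real.rpow_pos_of_pos two_pos _).le
          _ = ((2:ℝ) ^ (-(k:ℝ) * d) * (2:ℝ) ^ (((k:ℝ)+1) * u)) * (ε k / σ k) := by ring
          _ = ((2:ℝ) ^ u * (2:ℝ) ^ ((k:ℝ) * (u - d))) * (ε k / σ k) := by rw [hexp2]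
          _ = (2:ℝ) ^ u * ((2:ℝ) ^ ((k:ℝ) * (u - d)) * (ε k / σ k)) := by ring
      have hI1 : (∫ ρ in (g j)..(1:ℝ), F ρ)
          ≤ (2:ℝ) ^ u * ∑ k ∈ Finset.range j, (2:ℝ) ^ ((k:ℝ) * (u - d)) * (ε k / σ k) := by
        rw [hsum, Finset.mul_sum]
        exact Finset.sum_le_sum fun k _ => hpiece k
      -- transfer the weights using admissibility
      have htrans : (∑ k ∈ Finset.range j, (2:ℝ) ^ ((k:ℝ) * (u - d)) * (ε k / σ k))
          ≤ A * ((2:ℝ) ^ ((j:ℝ) * (u - d)) * ξ j / σ j) := by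
        have hper : ∀ k ∈ Finset.range j, (2:ℝ) ^ ((k:ℝ) * (u - d)) * (ε k / σ k)
            ≤ (A * (2:ℝ) ^ ((j:ℝ) * (u - d)) / σ j) * (c ^ (j - k) * ε k) := by
          intro k hk
          rw [Finset.mem_range] at hk
          have hmj : (j - k) + k = j := by omega
          have hmr : ((j - k : ℕ) : ℝ) = (j:ℝ) - (k:ℝ) := by
            rw [Nat.cast_sub hk.le]
          have hkey : σ j ≤ A * (2:ℝ) ^ (((j:ℝ) - (k:ℝ)) * (su + δ)) * σ k := by
            have h0 := hA (j - k) k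
            rw [hmj, hmr] at h0
            exact h0
          have hcm : c ^ (j - k) = (2:ℝ) ^ (-(((j:ℝ) - (k:ℝ)) * δ)) := by
            rw [hcdef, ← Real.rpow_natCast ((2:ℝ) ^ (-δ)) (j - k),
              ← Real.rpow_mul (by norm_num : (0:ℝ) ≤ 2), hmr]
            congr 1
            ring
          have hepow : (2:ℝ) ^ ((k:ℝ) * (u - d)) * (2:ℝ) ^ (((j:ℝ) - (k:ℝ)) * (su + δ))
              = (2:ℝ) ^ ((j:ℝ) * (u - d)) * (2:ℝ) ^ (-(((j:ℝ) - (k:ℝ)) * δ)) := by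
            rw [← Real.rpow_add two_pos, ← Real.rpow_add two_pos]
            congr 1
            rw [hsu']
            ring
          have hbase : (2:ℝ) ^ ((k:ℝ) * (u - d)) / σ k
              ≤ A * (2:ℝ) ^ ((j:ℝ) * (u - d)) * c ^ (j - k) / σ j := by
            rw [div_le_div_iff₀ (hpos k) (hpos j)]
            calc (2:ℝ) ^ ((k:ℝ) * (u - d)) * σ j
                ≤ (2:ℝ) ^ ((k:ℝ) * (u - d)) * (A * (2:ℝ) ^ (((j:ℝ) - (k:ℝ)) * (su + δ)) * σ k) :=
                  mul_le_mul_of_nonneg_left hkey (Real.rpow_pos_of_pos two_pos _).le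
              _ = A * ((2:ℝ) ^ ((k:ℝ) * (u - d)) * (2:ℝ) ^ (((j:ℝ) - (k:ℝ)) * (su + δ))) * σ k := by
                  ring
              _ = A * ((2:ℝ) ^ ((j:ℝ) * (u - d)) * (2:ℝ) ^ (-(((j:ℝ) - (k:ℝ)) * δ))) * σ k := by
                  rw [hepow]
              _ = A * (2:ℝ) ^ ((j:ℝ) * (u - d)) * c ^ (j - k) * σ k := by
                  rw [hcm]; ring
          calc (2:ℝ) ^ ((k:ℝ) * (u - d)) * (ε k / σ k)
              = ((2:ℝ) ^ ((k:ℝ) * (u - d)) / σ k) * ε k := by ring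
            _ ≤ (A * (2:ℝ) ^ ((j:ℝ) * (u - d)) * c ^ (j - k) / σ j) * ε k :=
                mul_le_mul_of_nonneg_right hbase (hεnn k)
            _ = (A * (2:ℝ) ^ ((j:ℝ) * (u - d)) / σ j) * (c ^ (j - k) * ε k) := by ring
        calc (∑ k ∈ Finset.range j, (2:ℝ) ^ ((k:ℝ) * (u - d)) * (ε k / σ k))
            ≤ ∑ k ∈ Finset.range j,
                (A * (2:ℝ) ^ ((j:ℝ) * (u - d)) / σ j) * (c ^ (j - k) * ε k) :=
              Finset.sum_le_sum hper
          _ = (A * (2:ℝ) ^ ((j:ℝ) * (u - d)) / σ j) * ξ j := by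
              rw [← Finset.mul_sum]
          _ = A * ((2:ℝ) ^ ((j:ℝ) * (u - d)) * ξ j / σ j) := by ring
      -- final assembly
      rw [hRHS, hsplit]
      have h5 : (∫ ρ in (g j)..(1:ℝ), F ρ)
          ≤ (2:ℝ) ^ u * (A * ((2:ℝ) ^ ((j:ℝ) * (u - d)) * ξ j / σ j)) :=
        hI1.trans (mul_le_mul_of_nonneg_left htrans (Real.rpow_pos_of_pos two_pos u).le)
      have h6 := mul_le_mul_of_nonneg_left h5 hu0.le
      have h7 := mul_le_mul_of_nonneg_left hI2 hu0.le
      have habs : |u| = u := abs_of_pos hu0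
      have hBval : B = C + C * |u| / vb := by rw [hBdef]; ring
      have hfin : u * (C / vb) ≤ C * |u| / vb := le_of_eq (by rw [habs]; ring)
      have hexp : u * ((∫ ρ in (g j)..(1:ℝ), F ρ) + ∫ ρ in (1:ℝ)..r, F ρ)
          = u * (∫ ρ in (g j)..(1:ℝ), F ρ) + u * ∫ ρ in (1:ℝ)..r, F ρ := mul_add u _ _
      have heq2 : |u| * (2:ℝ) ^ u * A * ((2:ℝ) ^ ((j:ℝ) * (u - d)) * ξ j / σ j)
          = u * ((2:ℝ) ^ u * (A * ((2:ℝ) ^ ((j:ℝ) * (u - d)) * ξ j / σ j))) := by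
        rw [habs]; ring
      linarith
end

section
/- Let σ be an admissible sequence and r ∈ [1,∞), and for h > −d/p let γ^{(h)} be admissible with common Boyd index ζ(h) := s̲(γ^{(h)}/σ) = s̄(γ^{(h)}/σ). Fix h, δ > 0, (ε_j) a positive sequence, and define E_j := {λ ∈ Λ_j : d_λ ≥ ε_j 2^{−δj}/γ^{(h)}_j}, where Λ_j is the set of dyadic cubes of side 2^{−j} and (d_λ) are nonnegative reals satisfying σ_j^r 2^{−jd} Σ_{λ∈Λ_j} d_λ^r ≤ ε_j^r for all j. Then #E_j ≤ 2^{jd}(2^{−δj}/γ^{(h)}_j)^{−r}σ_j^{−r}, and consequently, for every η > 0, the Hausdorff dimension of F := limsup_j ⋃_{λ∈E_j} 3λ is at most d + r(ζ(h) + δ + η). -/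
open MeasureTheory Filter Metric Topology
open scoped ENNReal NNReal

/-- The union `3λ` of the dyadic cube `λ_{j,k}` and its neighbours. -/
def threeCube (d : ℕ) (j : ℕ) (k : Fin d → ℤ) : Set (EuclideanSpace ℝ (Fin d)) :=
  {x | ∀ i, ((k i : ℝ) - 1) / 2 ^ j ≤ x i ∧ x i ≤ ((k i : ℝ) + 2) / 2 ^ j}

/-! Chebyshev's inequality bounds `#E_j` by the normalized `ℓ^r` mass `ε_j^r 2^{jd} σ_j^{-r}`
divided by the `r`-th power of the threshold. The upper Boyd index gives
`γ_j / σ_j ≤ C 2^{j(ζ+η)}` eventually, hence `#E_j ≤ K 2^{jA}` with `A = d + r(ζ+δ+η)`.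
The cubes `3λ`, `λ ∈ Λ_j`, have diameter at most `3√d 2^{-j}`, so for every `s > A` the series
`∑_j #E_j (3√d 2^{-j})^s` converges, and covering the limsup set by the cubes of `E_j`, `j ≥ n`,
shows that its `s`-dimensional Hausdorff measure vanishes (Hausdorff–Cantelli). -/

theorem Summable.finite_setOf_le {ι : Type*} {f : ι → ℝ} (hf : Summable f) {c : ℝ}
    (hc : 0 < c) : {k | c ≤ f k}.Finite :=
  (eventually_cofinite.1 (hf.tendsto_cofinite_zero.eventually (gt_mem_nhds hc))).subset
    fun _ hk => not_lt.2 hk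

theorem Summable.ncard_setOf_le_mul_le_tsum {ι : Type*} {f : ι → ℝ} (hf0 : ∀ k, 0 ≤ f k)
    (hf : Summable f) {c : ℝ} (hc : 0 < c) : ({k | c ≤ f k}.ncard : ℝ) * c ≤ ∑' k, f k := by
  have hfin := hf.finite_setOf_le hc
  rw [Set.ncard_eq_toFinset_card _ hfin, ← nsmul_eq_mul]
  calc hfin.toFinset.card • c ≤ ∑ k ∈ hfin.toFinset, f k :=
        Finset.card_nsmul_le_sum _ _ _ fun k hk => hfin.mem_toFinset.1 hk
    _ ≤ ∑' k, f k := hf.sum_le_tsum _ fun k _ => hf0 k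

theorem finite_and_ncard_setOf_le_le_tsum_rpow_div {ι : Type*} {D : ι → ℝ} (hD : ∀ k, 0 ≤ D k)
    {r : ℝ} (hr : 0 < r) (hsum : Summable fun k => D k ^ r) {t : ℝ} (ht : 0 < t) :
    {k | t ≤ D k}.Finite ∧ ({k | t ≤ D k}.ncard : ℝ) ≤ (∑' k, D k ^ r) / t ^ r := by
  have hset : {k | t ≤ D k} = {k | t ^ r ≤ D k ^ r} := by
    ext k
    exact (Real.rpow_le_rpow_iff ht.le (hD k) hr).symm
  have htr : 0 < t ^ r := Real.rpow_pos_of_pos ht r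
  rw [hset, le_div_iff₀ htr]
  exact ⟨hsum.finite_setOf_le htr,
    hsum.ncard_setOf_le_mul_le_tsum (fun k => Real.rpow_nonneg (hD k) r) htr⟩

theorem finite_and_ncard_setOf_mul_le_le {ι : Type*} {D : ι → ℝ} (hD : ∀ k, 0 ≤ D k) {r : ℝ}
    (hr : 0 < r) (hsum : Summable fun k => D k ^ r) {N σ ε u : ℝ} (hN : 0 < N) (hσ : 0 < σ)
    (hε : 0 < ε) (hu : 0 < u) (hbound : σ ^ r * N⁻¹ * ∑' k, D k ^ r ≤ ε ^ r) :
    {k | ε * u ≤ D k}.Finite ∧ ({k | ε * u ≤ D k}.ncard : ℝ) ≤ N * u ^ (-r) * σ ^ (-r) := by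
  obtain ⟨hfin, hcard⟩ := finite_and_ncard_setOf_le_le_tsum_rpow_div hD hr hsum (mul_pos hε hu)
  refine ⟨hfin, hcard.trans ?_⟩
  rw [Real.mul_rpow hε.le hu.le, Real.rpow_neg hu.le, Real.rpow_neg hσ.le]
  calc (∑' k, D k ^ r) / (ε ^ r * u ^ r)
      = (σ ^ r * N⁻¹ * ∑' k, D k ^ r) * (N * (u ^ r)⁻¹ * (σ ^ r)⁻¹) / ε ^ r := by
        field_simp
    _ ≤ ε ^ r * (N * (u ^ r)⁻¹ * (σ ^ r)⁻¹) / ε ^ r := by gcongr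
    _ = N * (u ^ r)⁻¹ * (σ ^ r)⁻¹ := by field_simp

namespace Admissible

variable {τ σ : ℕ → ℝ}

theorem div (hτ : Admissible τ) (hσ : Admissible σ) : Admissible fun j => τ j / σ j := by
  obtain ⟨hτ0, Cτ, hCτ, hτ⟩ := hτ
  obtain ⟨hσ0, Cσ, hCσ, hσ⟩ := hσ
  refine ⟨fun j => div_pos (hτ0 j) (hσ0 j), Cτ * Cσ, mul_pos hCτ hCσ, fun j => ⟨?_, ?_⟩⟩
  · calc (Cτ * Cσ)⁻¹ * (τ j / σ j) = Cτ⁻¹ * τ j / (Cσ * σ j) := by field_simp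
      _ ≤ τ (j + 1) / σ (j + 1) :=
        div_le_div₀ (hτ0 _).le (hτ j).1 (hσ0 _) (hσ j).2
  · calc τ (j + 1) / σ (j + 1) ≤ Cτ * τ j / (Cσ⁻¹ * σ j) :=
        div_le_div₀ (by positivity [hτ0 j]) (hτ j).2 (by positivity [hσ0 j]) (hσ j).1
      _ = Cτ * Cσ * (τ j / σ j) := by field_simp

theorem bddAbove_range_div (hτ : Admissible τ) (j : ℕ) :
    BddAbove (Set.range fun k => τ (j + k) / τ k) := by
  obtain ⟨hτ0, C, hC0, hC⟩ := hτ
  have hgrowth : ∀ k, τ (j + k) ≤ C ^ j * τ k := by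
    intro k
    induction j with
    | zero => simp
    | succ n ih =>
      calc τ (n + 1 + k) = τ (n + k + 1) := by rw [add_right_comm]
        _ ≤ C * τ (n + k) := (hC _).2
        _ ≤ C * (C ^ n * τ k) := mul_le_mul_of_nonneg_left ih hC0.le
        _ = C ^ (n + 1) * τ k := by ring
  exact ⟨C ^ j, Set.forall_mem_range.2 fun k => (div_le_iff₀ (hτ0 k)).2 (hgrowth k)⟩

theorem div_le_upperRatio (hτ : Admissible τ) (j : ℕ) : τ j / τ 0 ≤ upperRatio τ j :=
  le_ciSup (hτ.bddAbove_range_div j) 0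

theorem eventually_le_of_isUpperBoyd (hτ : Admissible τ) {ζ : ℝ} (hζ : IsUpperBoyd τ ζ)
    {η : ℝ} (hη : 0 < η) : ∀ᶠ j : ℕ in atTop, τ j ≤ τ 0 * 2 ^ ((j : ℝ) * (ζ + η)) := by
  filter_upwards [hζ.eventually_lt_const (lt_add_of_pos_right ζ hη), eventually_ge_atTop 1]
    with j hj hj1
  have hj0 : (0 : ℝ) < j := by exact_mod_cast hj1
  have hratio : 0 < τ j / τ 0 := div_pos (hτ.1 j) (hτ.1 0)
  have hupper := hratio.trans_le (hτ.div_le_upperRatio j)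
  rw [div_lt_iff₀ hj0, mul_comm, Real.logb_lt_iff_lt_rpow one_lt_two hupper] at hj
  rw [← div_le_iff₀' (hτ.1 0)]
  exact (hτ.div_le_upperRatio j).trans hj.le

end Admissible

theorem countBound_le_of_div_le {γ σ τ₀ r δ ζ η : ℝ} (d j : ℕ) (hγ : 0 < γ) (hσ : 0 < σ)
    (hτ₀ : 0 ≤ τ₀) (hr : 0 ≤ r) (h : γ / σ ≤ τ₀ * 2 ^ ((j : ℝ) * (ζ + η))) :
    (2 : ℝ) ^ ((j : ℝ) * d) * ((2 : ℝ) ^ (-δ * j) / γ) ^ (-r) * σ ^ (-r)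
      ≤ τ₀ ^ r * 2 ^ ((j : ℝ) * (d + r * (ζ + δ + η))) := by
  have hrewrite : ((2 : ℝ) ^ (-δ * j) / γ) ^ (-r) * σ ^ (-r) = (2 ^ (δ * j) * (γ / σ)) ^ r := by
    rw [Real.rpow_neg (by positivity), Real.rpow_neg hσ.le, ← Real.inv_rpow (by positivity),
      ← Real.inv_rpow hσ.le, ← Real.mul_rpow (by positivity) (by positivity), inv_div,
      neg_mul, Real.rpow_neg zero_le_two]
    field_simp
  calc (2 : ℝ) ^ ((j : ℝ) * d) * ((2 : ℝ) ^ (-δ * j) / γ) ^ (-r) * σ ^ (-r)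
      = 2 ^ ((j : ℝ) * d) * (2 ^ (δ * j) * (γ / σ)) ^ r := by rw [mul_assoc, hrewrite]
    _ ≤ 2 ^ ((j : ℝ) * d) * (2 ^ (δ * j) * (τ₀ * 2 ^ ((j : ℝ) * (ζ + η)))) ^ r := by
        gcongr
    _ = τ₀ ^ r * 2 ^ ((j : ℝ) * (d + r * (ζ + δ + η))) := by
        rw [mul_left_comm, ← Real.rpow_add two_pos,
          Real.mul_rpow hτ₀ (by positivity), ← Real.rpow_mul zero_le_two, mul_left_comm,
          ← Real.rpow_add two_pos]
        ring_nf

theorem ediam_threeCube_le (d j : ℕ) (k : Fin d → ℤ) :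
    ediam (threeCube d j k) ≤ ENNReal.ofReal (3 * √d / 2 ^ j) := by
  refine Metric.ediam_le fun x hx y hy => ?_
  have hcoord : ∀ i, dist (x i) (y i) ≤ 3 / 2 ^ j := fun i => by
    have hwidth : ((k i : ℝ) + 2) / 2 ^ j - ((k i : ℝ) - 1) / 2 ^ j = 3 / 2 ^ j := by ring
    rw [Real.dist_eq, abs_le]
    constructor <;> linarith [hx i, hy i]
  rw [edist_dist, EuclideanSpace.dist_eq]
  refine ENNReal.ofReal_le_ofReal ?_
  calc √(∑ i, dist (x i) (y i) ^ 2) ≤ √(∑ _i : Fin d, (3 / 2 ^ j : ℝ) ^ 2) :=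
        Real.sqrt_le_sqrt (Finset.sum_le_sum fun i _ =>
          pow_le_pow_left₀ dist_nonneg (hcoord i) 2)
    _ = 3 * √d / 2 ^ j := by
        rw [Finset.sum_const, Finset.card_univ, Fintype.card_fin, nsmul_eq_mul,
          Real.sqrt_mul (Nat.cast_nonneg d), Real.sqrt_sq (by positivity)]
        ring

section HausdorffCantelli

variable {X ι : Type*} [EMetricSpace X] {U : ℕ → ι → Set X} {E : ℕ → Set ι}

theorem hausdorffMeasure_limsup_eq_zero [MeasurableSpace X] [BorelSpace X] [Countable ι]
    {ρ : ℕ → ℝ≥0∞} (hρ : Antitone ρ) (hρ0 : Tendsto ρ atTop (𝓝 0))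
    (hdiam : ∀ j i, ediam (U j i) ≤ ρ j) {s : ℝ}
    (hsum : ∑' j, ∑' i : E j, ediam (U j i) ^ s ≠ ∞) :
    μH[s] {x | ∃ᶠ j in atTop, ∃ i ∈ E j, x ∈ U j i} = 0 := by
  have hcover : ∀ n, {x | ∃ᶠ j in atTop, ∃ i ∈ E j, x ∈ U j i} ⊆
      ⋃ p : (j : ℕ) × E (j + n), U (p.1 + n) p.2 := by
    intro n x hx
    obtain ⟨_, hJ, i, hi, hxi⟩ := frequently_atTop.1 hx n
    obtain ⟨j, rfl⟩ := Nat.exists_eq_add_of_le' hJ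
    exact Set.mem_iUnion.2 ⟨⟨j, i, hi⟩, hxi⟩
  refine nonpos_iff_eq_zero.1 ?_
  calc μH[s] _
      ≤ liminf (fun n => ∑' p : (j : ℕ) × E (j + n), ediam (U (p.1 + n) p.2) ^ s) atTop :=
        Measure.hausdorffMeasure_le_liminf_tsum s _ ρ hρ0 _
          (.of_forall fun n p => (hdiam _ _).trans (hρ (Nat.le_add_left n p.1)))
          (.of_forall hcover)
    _ = 0 := by
        simp_rw [ENNReal.tsum_sigma']
        exact (ENNReal.tendsto_sum_nat_add _ hsum).liminf_eq

theorem tsum_tsum_ediam_rpow_ne_top (hE : ∀ j, (E j).Finite) {c : ℝ} (hc : 0 ≤ c)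
    (hdiam : ∀ j i, ediam (U j i) ≤ ENNReal.ofReal (c / 2 ^ j)) {K A : ℝ}
    (hcard : ∀ᶠ j in atTop, ((E j).ncard : ℝ) ≤ K * 2 ^ (j * A)) {s : ℝ} (hs : 0 ≤ s)
    (hAs : A < s) : ∑' j, ∑' i : E j, ediam (U j i) ^ s ≠ ∞ := by
  set a : ℕ → ℝ := fun j => (E j).ncard * (c / 2 ^ j) ^ s
  have hterm : ∀ j, ∑' i : E j, ediam (U j i) ^ s ≤ ENNReal.ofReal (a j) := by
    intro j
    have := (hE j).fintype
    calc ∑' i : E j, ediam (U j i) ^ s ≤ ∑' _ : E j, ENNReal.ofReal ((c / 2 ^ j) ^ s) :=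
          ENNReal.tsum_le_tsum fun i => (ENNReal.rpow_le_rpow (hdiam j i) hs).trans_eq
            (ENNReal.ofReal_rpow_of_nonneg (by positivity) hs)
      _ = ENNReal.ofReal (a j) := by
          rw [tsum_fintype, Finset.sum_const, Finset.card_univ, ← Set.toFinset_card,
            ← Set.ncard_eq_toFinset_card', nsmul_eq_mul, ENNReal.ofReal_mul (by positivity),
            ENNReal.ofReal_natCast]
  have hgeom : ∀ j : ℕ, (c / 2 ^ j) ^ s * 2 ^ (j * A) = c ^ s * (2 ^ (A - s)) ^ j := by
    intro j
    rw [Real.div_rpow hc (by positivity), ← Real.rpow_natCast 2 j, ← Real.rpow_natCast,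
      ← Real.rpow_mul zero_le_two, ← Real.rpow_mul zero_le_two, div_mul_eq_mul_div,
      mul_div_assoc, ← Real.rpow_sub two_pos]
    ring_nf
  have ha : Summable a := by
    refine ((summable_geometric_of_lt_one (by positivity)
      (Real.rpow_lt_one_of_one_lt_of_neg one_lt_two (sub_neg.2 hAs))).mul_left (K * c ^ s))
      |>.of_norm_bounded_eventually_nat ?_
    filter_upwards [hcard] with j hj
    rw [Real.norm_of_nonneg (by positivity), mul_assoc, ← hgeom, mul_comm ((c / 2 ^ j) ^ s),
      ← mul_assoc]
    exact mul_le_mul_of_nonneg_right hj (by positivity)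
  exact ne_top_of_le_ne_top ha.tsum_ofReal_ne_top (ENNReal.tsum_le_tsum hterm)

theorem dimH_limsup_le [Countable ι] (hE : ∀ j, (E j).Finite) {c : ℝ} (hc : 0 ≤ c)
    (hdiam : ∀ j i, ediam (U j i) ≤ ENNReal.ofReal (c / 2 ^ j)) {K A : ℝ}
    (hcard : ∀ᶠ j in atTop, ((E j).ncard : ℝ) ≤ K * 2 ^ (j * A)) :
    dimH {x | ∃ᶠ j in atTop, ∃ i ∈ E j, x ∈ U j i} ≤ ENNReal.ofReal A := by
  borelize X
  refine dimH_le fun s hs => le_of_not_gt fun hAs => ?_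
  rw [← ENNReal.ofReal_coe_nnreal, ENNReal.ofReal_lt_ofReal_iff'] at hAs
  have hρ : Antitone fun j : ℕ => ENNReal.ofReal (c / 2 ^ j) := fun i j hij =>
    ENNReal.ofReal_le_ofReal (div_le_div_of_nonneg_left hc (by positivity)
      (pow_le_pow_right₀ one_le_two hij))
  have hρ0 : Tendsto (fun j : ℕ => ENNReal.ofReal (c / 2 ^ j)) atTop (𝓝 0) := by
    simpa using ENNReal.tendsto_ofReal
      ((tendsto_pow_atTop_atTop_of_one_lt one_lt_two).const_div_atTop c)
  exact ENNReal.zero_ne_top <| (hausdorffMeasure_limsup_eq_zero hρ hρ0 hdiam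
    (tsum_tsum_ediam_rpow_ne_top hE hc hdiam hcard s.2 hAs.1)).symm.trans hs

end HausdorffCantelli

theorem leader_counting_and_dimension_general (d : ℕ)
    (rr : ℝ) (hr : 1 ≤ rr)
    (σ γ : ℕ → ℝ) (hσ : Admissible σ) (hγ : Admissible γ)
    (ζ : ℝ)
    (hζu : IsUpperBoyd (fun j => γ j / σ j) ζ)
    (δ : ℝ) (ε : ℕ → ℝ) (hε : ∀ j, 0 < ε j)
    (D : ℕ → (Fin d → ℤ) → ℝ) (hD : ∀ j k, 0 ≤ D j k)
    (hsum : ∀ j, Summable (fun k : Fin d → ℤ => D j k ^ rr))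
    (hbound : ∀ j : ℕ,
      σ j ^ rr * (2:ℝ) ^ (-(j : ℝ) * d) * (∑' k : Fin d → ℤ, D j k ^ rr) ≤ ε j ^ rr) :
    (∀ j : ℕ,
      {k : Fin d → ℤ | ε j * (2:ℝ) ^ (-δ * j) / γ j ≤ D j k}.Finite ∧
      ({k : Fin d → ℤ | ε j * (2:ℝ) ^ (-δ * j) / γ j ≤ D j k}.ncard : ℝ)
        ≤ (2:ℝ) ^ ((j : ℝ) * d) * ((2:ℝ) ^ (-δ * j) / γ j) ^ (-rr) * (σ j) ^ (-rr)) ∧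
    (∀ η > (0:ℝ),
      dimH {x : EuclideanSpace ℝ (Fin d) |
          ∃ᶠ j in atTop, ∃ k ∈ {k : Fin d → ℤ | ε j * (2:ℝ) ^ (-δ * j) / γ j ≤ D j k},
            x ∈ threeCube d j k}
        ≤ ENNReal.ofReal (d + rr * (ζ + δ + η))) := by
  have hrr : 0 < rr := one_pos.trans_le hr
  have hratio := hγ.div hσ
  have hcount := fun j : ℕ => finite_and_ncard_setOf_mul_le_le (hD j) hrr (hsum j)
    (by positivity : (0 : ℝ) < 2 ^ ((j : ℝ) * d)) (hσ.1 j) (hε j)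
    (by positivity [hγ.1 j] : (0 : ℝ) < 2 ^ (-δ * j) / γ j)
    (by simpa only [neg_mul, Real.rpow_neg zero_le_two] using hbound j)
  simp only [mul_div_assoc]
  refine ⟨hcount, fun η hη => ?_⟩
  refine dimH_limsup_le (fun j => (hcount j).1) (by positivity) (ediam_threeCube_le d)
    (K := (γ 0 / σ 0) ^ rr) ?_
  filter_upwards [hratio.eventually_le_of_isUpperBoyd hζu hη] with j hj
  exact (hcount j).2.trans
    (countBound_le_of_div_le d j (hγ.1 j) (hσ.1 j) (hratio.1 0).le hrr.le hj)

/-- counting bound for large wavelet leaders and the resulting bound on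
the Hausdorff dimension of the associated limsup set. -/
theorem leader_counting_and_dimension (d : ℕ) (p r : ℝ≥0∞) (hp : 1 ≤ p)
    (rr : ℝ) (hr : 1 ≤ rr)
    (σ γ : ℕ → ℝ) (hσ : Admissible σ) (hγ : Admissible γ)
    (ζ : ℝ) (hζl : IsLowerBoyd (fun j => γ j / σ j) ζ)
    (hζu : IsUpperBoyd (fun j => γ j / σ j) ζ)
    (δ : ℝ) (hδ : 0 < δ) (ε : ℕ → ℝ) (hε : ∀ j, 0 < ε j)
    (D : ℕ → (Fin d → ℤ) → ℝ) (hD : ∀ j k, 0 ≤ D j k)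
    (hsum : ∀ j, Summable (fun k : Fin d → ℤ => D j k ^ rr))
    (hbound : ∀ j : ℕ,
      σ j ^ rr * (2:ℝ) ^ (-(j : ℝ) * d) * (∑' k : Fin d → ℤ, D j k ^ rr) ≤ ε j ^ rr) :
    (∀ j : ℕ,
      {k : Fin d → ℤ | ε j * (2:ℝ) ^ (-δ * j) / γ j ≤ D j k}.Finite ∧
      ({k : Fin d → ℤ | ε j * (2:ℝ) ^ (-δ * j) / γ j ≤ D j k}.ncard : ℝ)
        ≤ (2:ℝ) ^ ((j : ℝ) * d) * ((2:ℝ) ^ (-δ * j) / γ j) ^ (-rr) * (σ j) ^ (-rr)) ∧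
    (∀ η > (0:ℝ),
      dimH {x : EuclideanSpace ℝ (Fin d) |
          ∃ᶠ j in atTop, ∃ k ∈ {k : Fin d → ℤ | ε j * (2:ℝ) ^ (-δ * j) / γ j ≤ D j k},
            x ∈ threeCube d j k}
        ≤ ENNReal.ofReal (d + rr * (ζ + δ + η))) :=
  leader_counting_and_dimension_general d rr hr σ γ hσ hγ ζ hζu δ ε hε D hD hsum hbound
end

section
/- (Oscillation space equals Besov space) Let p, r, q ∈ [1,∞] with r ≤ p, and let σ be an admissible sequence with s̲(σ) > 0 and s̲(σ) − d/r > −d/p. If a family of wavelet coefficients (c_λ)_{λ∈Λ} satisfies (Σ_{λ∈Λ_j}(σ_j 2^{−jd/r}|c_λ|)^r)^{1/r} ∈ ℓ^q (in j), then also (Σ_{λ∈Λ_j}(σ_j 2^{−jd/r} d^p_λ)^r)^{1/r} ∈ ℓ^q, where d^p_λ = sup_{j'≥j}(Σ_{λ'∈Λ_{j'}, λ'⊂λ}(2^{(j−j')d/p}|c_{λ'}|)^p)^{1/p} is the p-wavelet leader of the dyadic cube λ ∈ Λ_j. -/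
open MeasureTheory Filter Metric Topology
open scoped ENNReal NNReal

/-- The `ℓ^q` norm (with values in `ℝ≥0∞`) of a family of extended nonnegative reals. -/
noncomputable def lqNorm {ι : Type*} (q : ℝ≥0∞) (a : ι → ℝ≥0∞) : ℝ≥0∞ :=
  if q = ∞ then ⨆ i, a i else (∑' i, a i ^ q.toReal) ^ (1 / q.toReal)

/-- `(j', k')` indexes a dyadic subcube of the dyadic cube indexed by `(j, k)`. -/
def IsSubcube (d : ℕ) (j : ℕ) (k : Fin d → ℤ) (j' : ℕ) (k' : Fin d → ℤ) : Prop :=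
  ∀ i, k i * 2 ^ (j' - j) ≤ k' i ∧ k' i < (k i + 1) * 2 ^ (j' - j)

/-- The `p`-wavelet leader of the dyadic cube indexed by `(j, k)` for the coefficient
family `c`. -/
noncomputable def pLeader (d : ℕ) (p : ℝ≥0∞) (c : ℕ → (Fin d → ℤ) → ℝ)
    (j : ℕ) (k : Fin d → ℤ) : ℝ≥0∞ :=
  ⨆ j' : ℕ, ⨆ _ : j ≤ j',
    lqNorm p (fun k' : {k' : Fin d → ℤ // IsSubcube d j k j' k'} =>
      ENNReal.ofReal ((2:ℝ) ^ (((j : ℝ) - (j' : ℝ)) * d / p.toReal) * |c j' k'.1|))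

/-!
The leader of a cube at scale `j` is a supremum over `m` of `2^{-md/p}` times the `ℓ^p` norm of
the coefficients of its subcubes at scale `j + m`. Since `r ≤ p`, that `ℓ^p` norm is at most the
`ℓ^r` norm, and because the subcubes of the cubes of scale `j` tile scale `j + m`, the `ℓ^r` norm
over scale `j` of the weighted leaders is at most `∑ₘ Wₘ aⱼ₊ₘ`, where `aⱼ` is the weighted `ℓ^r`
norm of the coefficients at scale `j` and `Wₘ` bounds `σⱼ 2^{-md/p} / (σⱼ₊ₘ 2^{-md/r})`.
The lower Boyd index gives `σⱼ ≤ K 2^{-me} σⱼ₊ₘ` for any `e < s̲(σ)`; choosing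
`d/r - d/p < e` makes `Wₘ = K 2^{-m(e + d/p - d/r)}` summable, and Young's inequality
`ℓ¹ * ℓ^q ⊆ ℓ^q` concludes.
-/

section lqNorm

variable {ι κ : Type*} {q : ℝ≥0∞}

lemma lqNorm_top (a : ι → ℝ≥0∞) : lqNorm ∞ a = ⨆ i, a i := if_pos rfl

lemma lqNorm_of_ne_top (hq : q ≠ ∞) (a : ι → ℝ≥0∞) :
    lqNorm q a = (∑' i, a i ^ q.toReal) ^ (1 / q.toReal) := if_neg hq

lemma lqNorm_one (a : ι → ℝ≥0∞) : lqNorm 1 a = ∑' i, a i := by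
  simp [lqNorm_of_ne_top ENNReal.one_ne_top]

lemma lqNorm_rpow_toReal (hq0 : q ≠ 0) (hq : q ≠ ∞) (a : ι → ℝ≥0∞) :
    lqNorm q a ^ q.toReal = ∑' i, a i ^ q.toReal := by
  rw [lqNorm_of_ne_top hq, ← ENNReal.rpow_mul,
    one_div_mul_cancel (ENNReal.toReal_pos hq0 hq).ne', ENNReal.rpow_one]

lemma lqNorm_le_iff (hq0 : q ≠ 0) (hq : q ≠ ∞) {a : ι → ℝ≥0∞} {x : ℝ≥0∞} :
    lqNorm q a ≤ x ↔ ∑' i, a i ^ q.toReal ≤ x ^ q.toReal := by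
  rw [← lqNorm_rpow_toReal hq0 hq, ENNReal.rpow_le_rpow_iff (ENNReal.toReal_pos hq0 hq)]

lemma lqNorm_mono {a b : ι → ℝ≥0∞} (h : ∀ i, a i ≤ b i) : lqNorm q a ≤ lqNorm q b := by
  rcases eq_or_ne q ∞ with rfl | hq
  · simp only [lqNorm_top]
    exact iSup_mono h
  · simp only [lqNorm_of_ne_top hq]
    gcongr with i
    exact h i

lemma le_lqNorm (hq0 : q ≠ 0) (a : ι → ℝ≥0∞) (i : ι) : a i ≤ lqNorm q a := by
  rcases eq_or_ne q ∞ with rfl | hq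
  · rw [lqNorm_top]
    exact le_iSup a i
  · rw [← ENNReal.rpow_le_rpow_iff (ENNReal.toReal_pos hq0 hq), lqNorm_rpow_toReal hq0 hq]
    exact ENNReal.le_tsum i

lemma lqNorm_const_mul (hq0 : q ≠ 0) (x : ℝ≥0∞) (a : ι → ℝ≥0∞) :
    lqNorm q (fun i => x * a i) = x * lqNorm q a := by
  rcases eq_or_ne q ∞ with rfl | hq
  · simp only [lqNorm_top, ENNReal.mul_iSup]
  · apply ENNReal.rpow_left_injective (ENNReal.toReal_pos hq0 hq).ne'
    simp only [ENNReal.mul_rpow_of_nonneg _ _ ENNReal.toReal_nonneg, lqNorm_rpow_toReal hq0 hq,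
      ENNReal.tsum_mul_left]

lemma lqNorm_comp_equiv (e : κ ≃ ι) (a : ι → ℝ≥0∞) : lqNorm q (fun k => a (e k)) = lqNorm q a := by
  rcases eq_or_ne q ∞ with rfl | hq
  · simp only [lqNorm_top, e.iSup_comp]
  · simp only [lqNorm_of_ne_top hq, e.tsum_eq (fun i => a i ^ q.toReal)]

lemma lqNorm_sigma (hq0 : q ≠ 0) {κ : ι → Type*} (a : (Σ i, κ i) → ℝ≥0∞) :
    lqNorm q (fun i => lqNorm q (fun k => a ⟨i, k⟩)) = lqNorm q a := by
  rcases eq_or_ne q ∞ with rfl | hq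
  · simp only [lqNorm_top, iSup_sigma]
  · apply ENNReal.rpow_left_injective (ENNReal.toReal_pos hq0 hq).ne'
    simp only [lqNorm_rpow_toReal hq0 hq, ENNReal.tsum_sigma']

lemma lqNorm_comm (hq0 : q ≠ 0) (a : ι → κ → ℝ≥0∞) :
    lqNorm q (fun i => lqNorm q (a i)) = lqNorm q (fun k => lqNorm q (fun i => a i k)) := by
  rcases eq_or_ne q ∞ with rfl | hq
  · simp only [lqNorm_top]
    exact iSup_comm
  · apply ENNReal.rpow_left_injective (ENNReal.toReal_pos hq0 hq).ne'
    simp only [lqNorm_rpow_toReal hq0 hq]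
    exact ENNReal.tsum_comm

lemma lqNorm_anti {r p : ℝ≥0∞} (hr : r ≠ 0) (hrp : r ≤ p) (a : ι → ℝ≥0∞) :
    lqNorm p a ≤ lqNorm r a := by
  rcases eq_or_ne p ∞ with rfl | hp
  · rw [lqNorm_top]
    exact iSup_le (le_lqNorm hr a)
  have hr' : r ≠ ∞ := ne_top_of_le_ne_top hp hrp
  have hrp' : r.toReal ≤ p.toReal := ENNReal.toReal_mono hp hrp
  have hgap : 0 ≤ p.toReal - r.toReal := sub_nonneg.2 hrp'
  set S := lqNorm r a
  rw [lqNorm_le_iff (ne_bot_of_le_ne_bot hr hrp) hp]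
  calc ∑' i, a i ^ p.toReal = ∑' i, a i ^ r.toReal * a i ^ (p.toReal - r.toReal) := by
        simp only [← ENNReal.rpow_add_of_nonneg _ _ ENNReal.toReal_nonneg hgap, add_sub_cancel]
    _ ≤ ∑' i, a i ^ r.toReal * S ^ (p.toReal - r.toReal) := by
        gcongr with i
        exact le_lqNorm hr a i
    _ = S ^ p.toReal := by
        rw [ENNReal.tsum_mul_right, ← lqNorm_rpow_toReal hr hr',
          ← ENNReal.rpow_add_of_nonneg _ _ ENNReal.toReal_nonneg hgap, add_sub_cancel]

lemma lqNorm_iSup_le_tsum {r : ℝ≥0∞} (hr : 1 ≤ r) (a : ι → κ → ℝ≥0∞) :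
    lqNorm r (fun i => ⨆ k, a i k) ≤ ∑' k, lqNorm r (fun i => a i k) := by
  have hr0 : r ≠ 0 := (zero_lt_one.trans_le hr).ne'
  calc lqNorm r (fun i => ⨆ k, a i k) ≤ lqNorm r (fun i => lqNorm r (a i)) :=
        lqNorm_mono fun i => (lqNorm_top (a i)).symm.trans_le (lqNorm_anti hr0 le_top (a i))
    _ = lqNorm r (fun k => lqNorm r (fun i => a i k)) := lqNorm_comm hr0 a
    _ ≤ lqNorm 1 (fun k => lqNorm r (fun i => a i k)) := lqNorm_anti one_ne_zero hr _
    _ = ∑' k, lqNorm r (fun i => a i k) := lqNorm_one _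

lemma rpow_tsum_mul_le_weight_mul_tsum {p : ℝ} (hp : 1 ≤ p) (w f : κ → ℝ≥0∞) :
    (∑' k, w k * f k) ^ p ≤ (∑' k, w k) ^ (p - 1) * ∑' k, w k * f k ^ p := by
  have hp0 : 0 < p := zero_lt_one.trans_le hp
  have hexp : 0 ≤ 1 - p⁻¹ := sub_nonneg.2 (inv_le_one_of_one_le₀ hp)
  have holder : ∑' k, w k * f k ≤ (∑' k, w k) ^ (1 - p⁻¹) * (∑' k, w k * f k ^ p) ^ p⁻¹ := by
    rw [ENNReal.tsum_eq_iSup_sum]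
    refine iSup_le fun s => (ENNReal.inner_le_weight_mul_Lp_of_nonneg s hp w f).trans ?_
    gcongr <;> exact ENNReal.sum_le_tsum s
  calc (∑' k, w k * f k) ^ p
      ≤ ((∑' k, w k) ^ (1 - p⁻¹) * (∑' k, w k * f k ^ p) ^ p⁻¹) ^ p := by gcongr
    _ = (∑' k, w k) ^ (p - 1) * ∑' k, w k * f k ^ p := by
        rw [ENNReal.mul_rpow_of_nonneg _ _ hp0.le, ← ENNReal.rpow_mul, ← ENNReal.rpow_mul,
          sub_mul, one_mul, inv_mul_cancel₀ hp0.ne', ENNReal.rpow_one]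

/-- Young's inequality `ℓ¹ * ℓ^q ⊆ ℓ^q`, for one-sided convolutions on `ℕ`. -/
lemma lqNorm_le_tsum_mul_lqNorm_of_le_shift_sum (hq : 1 ≤ q) {a b W : ℕ → ℝ≥0∞}
    (hb : ∀ j, b j ≤ ∑' m, W m * a (j + m)) : lqNorm q b ≤ (∑' m, W m) * lqNorm q a := by
  rcases eq_or_ne q ∞ with rfl | hq'
  · simp only [lqNorm_top]
    refine iSup_le fun j => (hb j).trans ?_
    rw [← ENNReal.tsum_mul_right]
    exact ENNReal.tsum_le_tsum fun m => mul_le_mul_right (le_iSup a (j + m)) _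
  have hq0 : q ≠ 0 := (zero_lt_one.trans_le hq).ne'
  set Q := q.toReal
  have hQ : 1 ≤ Q := by simpa using ENNReal.toReal_mono hq' hq
  rw [lqNorm_le_iff hq0 hq', ENNReal.mul_rpow_of_nonneg _ _ ENNReal.toReal_nonneg,
    lqNorm_rpow_toReal hq0 hq']
  calc ∑' j, b j ^ Q ≤ ∑' j, (∑' m, W m) ^ (Q - 1) * ∑' m, W m * a (j + m) ^ Q :=
        ENNReal.tsum_le_tsum fun j =>
          (ENNReal.rpow_le_rpow (hb j) (by positivity)).trans
            (rpow_tsum_mul_le_weight_mul_tsum hQ _ _)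
    _ = (∑' m, W m) ^ (Q - 1) * ∑' m, W m * ∑' j, a (j + m) ^ Q := by
        rw [ENNReal.tsum_mul_left, ENNReal.tsum_comm]
        simp only [ENNReal.tsum_mul_left]
    _ ≤ (∑' m, W m) ^ (Q - 1) * ∑' m, W m * ∑' j, a j ^ Q := by
        refine mul_le_mul_right (ENNReal.tsum_le_tsum fun m => mul_le_mul_right ?_ _) _
        exact ENNReal.tsum_comp_le_tsum_of_injective (add_left_injective m) _
    _ = (∑' m, W m) ^ Q * ∑' j, a j ^ Q := by
        rw [ENNReal.tsum_mul_right, ← mul_assoc]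
        nth_rw 2 [← ENNReal.rpow_one (∑' m, W m)]
        rw [← ENNReal.rpow_add_of_nonneg _ _ (by linarith) zero_le_one, sub_add_cancel]

end lqNorm

section Dyadic

lemma isSubcube_ediv (d j j' : ℕ) (k' : Fin d → ℤ) :
    IsSubcube d j (fun i => k' i / 2 ^ (j' - j)) j' k' := fun i =>
  ⟨Int.ediv_mul_le (k' i) (by positivity), Int.lt_ediv_add_one_mul_self (k' i) (by positivity)⟩

lemma IsSubcube.ediv_eq {d j j' : ℕ} {k k' : Fin d → ℤ} (h : IsSubcube d j k j' k') :
    (fun i => k' i / 2 ^ (j' - j)) = k := by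
  funext i
  have h2 : (0 : ℤ) < 2 ^ (j' - j) := by positivity
  exact le_antisymm (Int.lt_add_one_iff.1 ((Int.ediv_lt_iff_lt_mul h2).2 (h i).2))
    ((Int.le_ediv_iff_mul_le h2).2 (h i).1)

def subcubeSigmaEquiv (d j j' : ℕ) :
    (Σ k : Fin d → ℤ, {k' : Fin d → ℤ // IsSubcube d j k j' k'}) ≃ (Fin d → ℤ) where
  toFun x := x.2.1
  invFun k' := ⟨_, k', isSubcube_ediv d j j' k'⟩
  left_inv := fun ⟨_, _, hk'⟩ => Sigma.subtype_ext hk'.ediv_eq rfl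
  right_inv _ := rfl

lemma lqNorm_lqNorm_subcube {q : ℝ≥0∞} (hq0 : q ≠ 0) (d j j' : ℕ) (a : (Fin d → ℤ) → ℝ≥0∞) :
    lqNorm q (fun k => lqNorm q (fun k' : {k' : Fin d → ℤ // IsSubcube d j k j' k'} => a k')) =
      lqNorm q a :=
  (lqNorm_sigma hq0 fun x : (Σ k : Fin d → ℤ, {k' : Fin d → ℤ // IsSubcube d j k j' k'}) =>
    a x.2).trans (lqNorm_comp_equiv (subcubeSigmaEquiv d j j') a)

end Dyadic

section Leaders

variable {d : ℕ} {p r : ℝ≥0∞}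

lemma pLeader_eq_iSup (c : ℕ → (Fin d → ℤ) → ℝ) (j : ℕ) (k : Fin d → ℤ) :
    pLeader d p c j k = ⨆ m : ℕ,
      lqNorm p (fun k' : {k' : Fin d → ℤ // IsSubcube d j k (j + m) k'} =>
        ENNReal.ofReal ((2:ℝ) ^ (-(m : ℝ) * d / p.toReal) * |c (j + m) k'.1|)) := by
  refine (iSup_ge_eq_iSup_nat_add _ j).trans (iSup_congr fun m => ?_)
  rw [add_comm m j]
  congr! 5
  push_cast
  ring

lemma lqNorm_mul_pLeader_le (hr : 1 ≤ r) (hrp : r ≤ p) (c : ℕ → (Fin d → ℤ) → ℝ)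
    (ω : ℕ → ℝ) (W : ℕ → ℝ≥0∞) (j : ℕ)
    (hω : ∀ m : ℕ, ENNReal.ofReal (ω j * 2 ^ (-(m : ℝ) * d / p.toReal)) ≤
      W m * ENNReal.ofReal (ω (j + m))) :
    lqNorm r (fun k => ENNReal.ofReal (ω j) * pLeader d p c j k) ≤
      ∑' m, W m * lqNorm r (fun k => ENNReal.ofReal (ω (j + m) * |c (j + m) k|)) := by
  have hr0 : r ≠ 0 := (zero_lt_one.trans_le hr).ne'
  set g : ℕ → (Fin d → ℤ) → ℝ≥0∞ := fun m k' => W m * ENNReal.ofReal (ω (j + m) * |c (j + m) k'|)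
  have hterm : ∀ k m, ENNReal.ofReal (ω j) *
      lqNorm p (fun k' : {k' : Fin d → ℤ // IsSubcube d j k (j + m) k'} =>
        ENNReal.ofReal ((2:ℝ) ^ (-(m : ℝ) * d / p.toReal) * |c (j + m) k'.1|)) ≤
      lqNorm r (fun k' : {k' : Fin d → ℤ // IsSubcube d j k (j + m) k'} => g m k') := by
    intro k m
    rw [← lqNorm_const_mul (zero_lt_one.trans_le (hr.trans hrp)).ne']
    refine (lqNorm_mono fun k' => ?_).trans (lqNorm_anti hr0 hrp _)
    simp only [g]
    rw [← ENNReal.ofReal_mul' (by positivity), ← mul_assoc, ENNReal.ofReal_mul' (abs_nonneg _),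
      ENNReal.ofReal_mul' (abs_nonneg _), ← mul_assoc]
    exact mul_le_mul_left (hω m) _
  calc lqNorm r (fun k => ENNReal.ofReal (ω j) * pLeader d p c j k)
      ≤ lqNorm r (fun k => ⨆ m, lqNorm r
          (fun k' : {k' : Fin d → ℤ // IsSubcube d j k (j + m) k'} => g m k')) := by
        refine lqNorm_mono fun k => ?_
        rw [pLeader_eq_iSup, ENNReal.mul_iSup]
        exact iSup_mono (hterm k)
    _ ≤ ∑' m, lqNorm r (fun k => lqNorm r
          (fun k' : {k' : Fin d → ℤ // IsSubcube d j k (j + m) k'} => g m k')) :=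
        lqNorm_iSup_le_tsum hr _
    _ = ∑' m, W m * lqNorm r (fun k => ENNReal.ofReal (ω (j + m) * |c (j + m) k|)) := by
        refine tsum_congr fun m => ?_
        rw [lqNorm_lqNorm_subcube hr0 d j (j + m) (g m), lqNorm_const_mul hr0]

end Leaders

section Boyd

variable {σ : ℕ → ℝ}

lemma Admissible.lowerRatio_pos (hσ : Admissible σ) (m : ℕ) : 0 < lowerRatio σ m := by
  obtain ⟨hpos, C, hC, hCσ⟩ := hσ
  have hgrowth : ∀ m k : ℕ, C⁻¹ ^ m * σ k ≤ σ (m + k) := by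
    intro m k
    induction m with
    | zero => simp
    | succ m ih =>
      rw [pow_succ', mul_assoc, Nat.add_right_comm]
      exact (mul_le_mul_of_nonneg_left ih (by positivity)).trans (hCσ (m + k)).1
  refine (by positivity : (0:ℝ) < C⁻¹ ^ m).trans_le (le_ciInf fun k => ?_)
  rw [le_div_iff₀ (hpos k)]
  exact hgrowth m k

lemma lowerRatio_mul_le (hpos : ∀ j, 0 < σ j) (m j : ℕ) : lowerRatio σ m * σ j ≤ σ (m + j) := by
  have hbdd : BddBelow (Set.range fun k => σ (m + k) / σ k) :=
    ⟨0, by rintro _ ⟨k, rfl⟩; exact div_nonneg (hpos _).le (hpos _).le⟩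
  rw [← le_div_iff₀ (hpos j)]
  exact ciInf_le hbdd j

lemma IsLowerBoyd.eventually_two_rpow_le {sl e : ℝ} (hl : IsLowerBoyd σ sl)
    (hpos : ∀ m, 0 < lowerRatio σ m) (he : e < sl) :
    ∀ᶠ m : ℕ in atTop, (2:ℝ) ^ ((m : ℝ) * e) ≤ lowerRatio σ m := by
  filter_upwards [hl.eventually (eventually_gt_nhds he), eventually_gt_atTop 0] with m hm hm0
  rw [← Real.le_logb_iff_rpow_le one_lt_two (hpos m), ← le_div_iff₀' (by exact_mod_cast hm0)]
  exact hm.le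

lemma exists_pos_le_of_eventually_one_le {g : ℕ → ℝ} (hg : ∀ m, 0 < g m)
    (h : ∀ᶠ m in atTop, 1 ≤ g m) : ∃ A > 0, ∀ m, A ≤ g m := by
  obtain ⟨M, hM⟩ := eventually_atTop.1 h
  refine ⟨(Finset.range (M + 1)).inf' Finset.nonempty_range_add_one (fun m => min 1 (g m)),
    (Finset.lt_inf'_iff _).2 fun m _ => lt_min one_pos (hg m), fun m => ?_⟩
  rcases le_or_gt M m with hm | hm
  · exact (Finset.inf'_le _ (Finset.mem_range.2 M.lt_succ_self)).trans
      ((min_le_left _ _).trans (hM m hm))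
  · exact (Finset.inf'_le _ (Finset.mem_range.2 (hm.trans M.lt_succ_self))).trans (min_le_right _ _)

lemma Admissible.exists_le_mul_two_rpow {sl e : ℝ} (hσ : Admissible σ) (hl : IsLowerBoyd σ sl)
    (he : e < sl) : ∃ K > 0, ∀ j m : ℕ, σ j ≤ K * 2 ^ (-(m : ℝ) * e) * σ (j + m) := by
  obtain ⟨A, hA, hAg⟩ := exists_pos_le_of_eventually_one_le
    (g := fun m => lowerRatio σ m / 2 ^ ((m : ℝ) * e))
    (fun m => div_pos (hσ.lowerRatio_pos m) (by positivity))
    ((hl.eventually_two_rpow_le hσ.lowerRatio_pos he).mono fun m hm =>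
      (one_le_div (by positivity)).2 hm)
  refine ⟨A⁻¹, inv_pos.2 hA, fun j m => ?_⟩
  have hAm : A * 2 ^ ((m : ℝ) * e) ≤ lowerRatio σ m := (le_div_iff₀ (by positivity)).1 (hAg m)
  rw [neg_mul, Real.rpow_neg zero_le_two, ← mul_inv, le_inv_mul_iff₀ (by positivity), add_comm]
  exact (mul_le_mul_of_nonneg_right hAm (hσ.1 j).le).trans (lowerRatio_mul_le hσ.1 m j)

end Boyd

lemma ofReal_mul_two_rpow_le {d : ℕ} {p r : ℝ≥0∞} {σ : ℕ → ℝ} {K e : ℝ} (hK : 0 ≤ K)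
    (hσ : ∀ j m : ℕ, σ j ≤ K * 2 ^ (-(m : ℝ) * e) * σ (j + m)) (j m : ℕ) :
    ENNReal.ofReal (σ j * 2 ^ (-(j : ℝ) * d / r.toReal) * 2 ^ (-(m : ℝ) * d / p.toReal)) ≤
      ENNReal.ofReal (K * 2 ^ (-(m : ℝ) * (e + d / p.toReal - d / r.toReal))) *
        ENNReal.ofReal (σ (j + m) * 2 ^ (-((j + m : ℕ) : ℝ) * d / r.toReal)) := by
  rw [← ENNReal.ofReal_mul (by positivity)]
  refine ENNReal.ofReal_le_ofReal ?_
  have hexp : (2:ℝ) ^ (-(m : ℝ) * e) * 2 ^ (-(j : ℝ) * d / r.toReal) * 2 ^ (-(m : ℝ) * d / p.toReal)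
      = 2 ^ (-(m : ℝ) * (e + d / p.toReal - d / r.toReal)) *
        2 ^ (-((j + m : ℕ) : ℝ) * d / r.toReal) := by
    simp only [← Real.rpow_add two_pos]
    push_cast
    ring_nf
  calc σ j * 2 ^ (-(j : ℝ) * d / r.toReal) * 2 ^ (-(m : ℝ) * d / p.toReal)
      ≤ K * 2 ^ (-(m : ℝ) * e) * σ (j + m) * 2 ^ (-(j : ℝ) * d / r.toReal) *
          2 ^ (-(m : ℝ) * d / p.toReal) := by gcongr; exact hσ j m
    _ = _ := by linear_combination (K * σ (j + m)) * hexp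

lemma tsum_ofReal_mul_two_rpow_ne_top (K : ℝ) {δ : ℝ} (hδ : 0 < δ) :
    ∑' m : ℕ, ENNReal.ofReal (K * 2 ^ (-(m : ℝ) * δ)) ≠ ∞ := by
  have hgeom : ∀ m : ℕ, ENNReal.ofReal (K * 2 ^ (-(m : ℝ) * δ)) =
      ENNReal.ofReal K * ENNReal.ofReal (2 ^ (-δ)) ^ m := by
    intro m
    rw [← ENNReal.ofReal_pow (by positivity), ← Real.rpow_natCast, ← Real.rpow_mul zero_le_two,
      ← ENNReal.ofReal_mul' (by positivity), mul_comm (-δ)]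
    ring_nf
  rw [tsum_congr hgeom, ENNReal.tsum_mul_left, ENNReal.tsum_geometric]
  refine ENNReal.mul_ne_top ENNReal.ofReal_ne_top (ENNReal.inv_ne_top.2 ?_)
  rw [Ne, tsub_eq_zero_iff_le, not_le, ENNReal.ofReal_lt_one]
  exact Real.rpow_lt_one_of_one_lt_of_neg one_lt_two (neg_neg_of_pos hδ)

theorem besov_implies_oscillation_general (d : ℕ) (p r q : ℝ≥0∞)
    (hr1 : 1 ≤ r) (hrp : r ≤ p) (hq : 1 ≤ q)
    (σ : ℕ → ℝ) (hσ : Admissible σ) (sl : ℝ) (hl : IsLowerBoyd σ sl)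
    (hcond : -((d : ℝ) / p.toReal) < sl - (d : ℝ) / r.toReal)
    (c : ℕ → (Fin d → ℤ) → ℝ)
    (hc : lqNorm q (fun j : ℕ => lqNorm r (fun k : Fin d → ℤ =>
      ENNReal.ofReal (σ j * (2:ℝ) ^ (-(j : ℝ) * d / r.toReal) * |c j k|))) < ∞) :
    lqNorm q (fun j : ℕ => lqNorm r (fun k : Fin d → ℤ =>
      ENNReal.ofReal (σ j * (2:ℝ) ^ (-(j : ℝ) * d / r.toReal)) * pLeader d p c j k)) < ∞ := by
  obtain ⟨e, hde, hesl⟩ : ∃ e, (d : ℝ) / r.toReal - d / p.toReal < e ∧ e < sl :=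
    exists_between (by linarith)
  obtain ⟨K, hK, hσK⟩ := hσ.exists_le_mul_two_rpow hl hesl
  have hW := tsum_ofReal_mul_two_rpow_ne_top K
    (show 0 < e + d / p.toReal - d / r.toReal by linarith)
  refine (lqNorm_le_tsum_mul_lqNorm_of_le_shift_sum hq fun j =>
    lqNorm_mul_pLeader_le hr1 hrp c (fun j => σ j * 2 ^ (-(j : ℝ) * d / r.toReal))
      (fun m => ENNReal.ofReal (K * 2 ^ (-(m : ℝ) * (e + d / p.toReal - d / r.toReal)))) j (ofReal_mul_two_rpow_le hK.le hσK j)).trans_lt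
    (ENNReal.mul_lt_top hW.lt_top hc)

/-- a Besov-type bound on wavelet coefficients implies the same bound
for the `p`-wavelet leaders (oscillation space = Besov space, one inclusion). -/
theorem besov_implies_oscillation (d : ℕ) (p r q : ℝ≥0∞)
    (hr1 : 1 ≤ r) (hrp : r ≤ p) (hq : 1 ≤ q)
    (σ : ℕ → ℝ) (hσ : Admissible σ) (sl : ℝ) (hl : IsLowerBoyd σ sl)
    (hs0 : 0 < sl) (hcond : -((d : ℝ) / p.toReal) < sl - (d : ℝ) / r.toReal)
    (c : ℕ → (Fin d → ℤ) → ℝ)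
    (hc : lqNorm q (fun j : ℕ => lqNorm r (fun k : Fin d → ℤ =>
      ENNReal.ofReal (σ j * (2:ℝ) ^ (-(j : ℝ) * d / r.toReal) * |c j k|))) < ∞) :
    lqNorm q (fun j : ℕ => lqNorm r (fun k : Fin d → ℤ =>
      ENNReal.ofReal (σ j * (2:ℝ) ^ (-(j : ℝ) * d / r.toReal)) * pLeader d p c j k)) < ∞ :=
  besov_implies_oscillation_general d p r q hr1 hrp hq σ hσ sl hl hcond c hc
end
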